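/- arXiv:1903.07196 — 6 statements merged into one kernel-verified Lean document; each statement's English description precedes it below -/
import Mathlib

section
/- (Antipodality for pseudoplanes.) Let Λ be a family of n pseudoplanes in general position in ℝ³, let k be a nonnegative integer, let a, b ∈ Λ be distinct and let γ_{a,b} = a ∩ b be their intersection curve. Let p be a point of γ_{a,b} that does not lie on any pseudoplane of D = Λ \ {a,b}. Set D^k = {d ∈ D : C_{a,b,d} ∈ C^k}, h_up = {d ∈ D : d(p_x, p_y) > p_z} and h_down = {d ∈ D : d(p_x, p_y) < p_z} (these are the pseudoplanes crossing the vertical line through p above, respectively below, p). Then | |h_up ∩ D^k| − |h_down ∩ D^k| | ≤ 2. -/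
open scoped Classical

noncomputable section

/-- A pseudoplane, identified with the total bivariate (curried) function whose graph it is. -/
abbrev PP : Type := ℝ → ℝ → ℝ

/-- `φ : ℝ → ℝ` is the continuous function whose graph is the xy-projection of the
intersection curve `γ_{a,b} = a ∩ b` of the pseudoplanes `a` and `b`. -/
def IsGraphFun (a b : PP) (φ : ℝ → ℝ) : Prop :=
  Continuous φ ∧ ∀ x y : ℝ, a x y = b x y ↔ y = φ x

/-- A family of pseudoplanes in general position in ℝ³:
(1) each member is (the graph of) a continuous total bivariate function;
(2) the intersection of any two distinct members is the graph of a continuous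
    function `φ_{a,b} : ℝ → ℝ` (a connected x-monotone unbounded curve);
(3) any three distinct members intersect in exactly one point;
(4) the xy-projections of the intersection curves form a family of pseudolines:
    for distinct pairs `{a,b} ≠ {c,d}`, `φ_{a,b}` and `φ_{c,d}` agree at exactly one point;
(5) no point is incident to more than three pseudoplanes;
(6) no two pseudoplanes are tangent (the difference changes sign);
(7) no intersection curve of two pseudoplanes is tangent to a third pseudoplane
    (the relevant difference function takes both signs). -/
def PseudoplaneFamily (Λ : Finset PP) : Prop :=
  (∀ a ∈ Λ, Continuous fun q : ℝ × ℝ => a q.1 q.2) ∧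
  (∀ a ∈ Λ, ∀ b ∈ Λ, a ≠ b → ∃ φ : ℝ → ℝ, IsGraphFun a b φ) ∧
  (∀ a ∈ Λ, ∀ b ∈ Λ, ∀ c ∈ Λ, a ≠ b → a ≠ c → b ≠ c →
    ∃! q : ℝ × ℝ, a q.1 q.2 = b q.1 q.2 ∧ a q.1 q.2 = c q.1 q.2) ∧
  (∀ a ∈ Λ, ∀ b ∈ Λ, ∀ c ∈ Λ, ∀ d ∈ Λ, a ≠ b → c ≠ d → ({a, b} : Finset PP) ≠ {c, d} →
    ∀ φ ψ : ℝ → ℝ, IsGraphFun a b φ → IsGraphFun c d ψ → ∃! x : ℝ, φ x = ψ x) ∧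
  (∀ a ∈ Λ, ∀ b ∈ Λ, ∀ c ∈ Λ, ∀ d ∈ Λ, a ≠ b → a ≠ c → a ≠ d → b ≠ c → b ≠ d → c ≠ d →
    ¬ ∃ x y : ℝ, a x y = b x y ∧ a x y = c x y ∧ a x y = d x y) ∧
  (∀ a ∈ Λ, ∀ b ∈ Λ, a ≠ b → (∃ x y : ℝ, a x y < b x y) ∧ (∃ x y : ℝ, b x y < a x y)) ∧
  (∀ a ∈ Λ, ∀ b ∈ Λ, ∀ c ∈ Λ, a ≠ b → a ≠ c → b ≠ c → ∀ φ : ℝ → ℝ, IsGraphFun a b φ →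
    (∃ x : ℝ, c x (φ x) < a x (φ x)) ∧ (∃ x : ℝ, a x (φ x) < c x (φ x)))

/-- The level of the point `(x, y, z)`: the number of members of `Λ` passing strictly below it. -/
def level (Λ : Finset PP) (x y z : ℝ) : ℕ :=
  (Λ.filter fun a => a x y < z).card

/-- The triple `s = {a,b,c}` spans a `k`-corridor: its common (triple intersection) point
is at level `k`. -/
def IsKCorridorTriple (Λ : Finset PP) (k : ℕ) (s : Finset PP) : Prop :=
  ∃ x y z : ℝ, (∀ a ∈ s, a x y = z) ∧ level Λ x y z = k

/-- The set `C^k` of `k`-corridors, encoded by the 3-element subsets of `Λ` spanning them. -/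
def kCorridors (Λ : Finset PP) (k : ℕ) : Finset (Finset PP) :=
  (Λ.powersetCard 3).filter (IsKCorridorTriple Λ k)

/-- The corridor of a triple `s`: the open region strictly between the lower and the upper
envelope of the three surfaces in `s`. Points of ℝ³ are `(x, (y, z))`. -/
def corridorSet (s : Finset PP) : Set (ℝ × ℝ × ℝ) :=
  {p | (∃ a ∈ s, a p.1 p.2.1 < p.2.2) ∧ (∃ a ∈ s, p.2.2 < a p.1 p.2.1)}

/-- The common intersection curve of the members of `s`. -/
def curveSet (s : Finset PP) : Set (ℝ × ℝ × ℝ) :=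
  {p | ∀ a ∈ s, a p.1 p.2.1 = p.2.2}

/-- The corridor spanned by `s₁` is immersed in the corridor spanned by `s₂`: they share
exactly one pseudoplane, and the intersection curve of the other two pseudoplanes of `s₁`
is fully contained in the corridor of `s₂`. -/
def Immersed (s₁ s₂ : Finset PP) : Prop :=
  (s₁ ∩ s₂).card = 1 ∧ curveSet (s₁ \ s₂) ⊆ corridorSet s₂

/-- `X^k`: the number of ordered pairs of `k`-corridors such that the first is immersed
in the second. -/
def numImmersedPairs (Λ : Finset PP) (k : ℕ) : ℕ :=
  ((kCorridors Λ k ×ˢ kCorridors Λ k).filter fun q => Immersed q.1 q.2).card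


/-- Level function for the abstract walk lemma. -/
def LL {ι : Type*} [DecidableEq ι] (S : Finset ι) (x : ι → ℝ) (σ : ι → Prop) (c : ℕ) (d : ι) : ℕ :=
  c + (S.filter fun e => x d < x e ∧ ¬ σ e).card + (S.filter fun e => x e < x d ∧ σ e).card

lemma comb {ι : Type*} [DecidableEq ι] (k : ℕ) (S : Finset ι) :
    ∀ (x : ι → ℝ) (σ : ι → Prop) (c : ℕ), Set.InjOn x S →
      (c + (S.filter fun e => ¬ σ e).card ≤ k →
        ((S.filter fun d => σ d ∧ LL S x σ c d = k).card : ℤ)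
          - ((S.filter fun d => ¬ σ d ∧ LL S x σ c d = k).card : ℤ) = 0 ∨
        ((S.filter fun d => σ d ∧ LL S x σ c d = k).card : ℤ)
          - ((S.filter fun d => ¬ σ d ∧ LL S x σ c d = k).card : ℤ) = 1) ∧
      (k < c + (S.filter fun e => ¬ σ e).card →
        ((S.filter fun d => σ d ∧ LL S x σ c d = k).card : ℤ)
          - ((S.filter fun d => ¬ σ d ∧ LL S x σ c d = k).card : ℤ) = -1 ∨
        ((S.filter fun d => σ d ∧ LL S x σ c d = k).card : ℤ)
          - ((S.filter fun d => ¬ σ d ∧ LL S x σ c d = k).card : ℤ) = 0) := by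
  induction S using Finset.strongInduction with
  | _ S ih =>
  intro x σ c hinj
  rcases S.eq_empty_or_nonempty with rfl | hne
  · simp
  obtain ⟨d₁, hd₁S, hmin⟩ := S.exists_min_image x hne
  set S' : Finset ι := S.erase d₁ with hS'
  have hss : S' ⊂ S := Finset.erase_ssubset hd₁S
  have hinj' : Set.InjOn x S' := hinj.mono (by exact_mod_cast Finset.erase_subset _ _)
  have h1 : ∀ e ∈ S', x d₁ < x e := by
    intro e he
    have heS : e ∈ S := Finset.mem_of_mem_erase he
    have hne' : e ≠ d₁ := Finset.ne_of_mem_erase he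
    rcases lt_or_eq_of_le (hmin e heS) with h | h
    · exact h
    · exact absurd (hinj hd₁S heS h) (Ne.symm hne')
  have hd₁S' : d₁ ∉ S' := Finset.notMem_erase _ _
  have hsplit_pos : ∀ (p : ι → Prop) [DecidablePred p], p d₁ →
      S.filter p = insert d₁ (S'.filter p) := by
    intro p _ hp
    ext e
    simp only [Finset.mem_filter, Finset.mem_insert, hS', Finset.mem_erase]
    by_cases he : e = d₁
    · subst he; simp [hp, hd₁S]
    · simp only [he, false_or]
      tauto
  have hsplit_neg : ∀ (p : ι → Prop) [DecidablePred p], ¬ p d₁ →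
      S.filter p = S'.filter p := by
    intro p _ hp
    ext e
    simp only [Finset.mem_filter, hS', Finset.mem_erase]
    constructor
    · rintro ⟨heS, hpe⟩; exact ⟨⟨fun h => hp (h ▸ hpe), heS⟩, hpe⟩
    · rintro ⟨⟨-, heS⟩, hpe⟩; exact ⟨heS, hpe⟩
  have hcard_pos : ∀ (p : ι → Prop) [DecidablePred p], p d₁ →
      (S.filter p).card = (S'.filter p).card + 1 := by
    intro p _ hp
    rw [hsplit_pos p hp,
      Finset.card_insert_of_notMem (fun h => hd₁S' (Finset.mem_of_mem_filter _ h))]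
  set m : ℕ := (S'.filter fun e => ¬ σ e).card with hm
  have hLd₁ : LL S x σ c d₁ = c + m := by
    have e1 : (S.filter fun e => x d₁ < x e ∧ ¬ σ e) = (S'.filter fun e => ¬ σ e) := by
      ext e
      simp only [Finset.mem_filter, hS', Finset.mem_erase]
      constructor
      · rintro ⟨heS, hlt, hσ⟩
        exact ⟨⟨fun h => by simp [h] at hlt, heS⟩, hσ⟩
      · rintro ⟨⟨hne', heS⟩, hσ⟩
        exact ⟨heS, h1 e (Finset.mem_erase.2 ⟨hne', heS⟩), hσ⟩
    have e2 : (S.filter fun e => x e < x d₁ ∧ σ e) = ∅ := by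
      ext e
      simp only [Finset.mem_filter, Finset.notMem_empty, iff_false]
      rintro ⟨heS, hlt, -⟩
      exact absurd (hmin e heS) (not_le_of_gt hlt)
    simp [LL, e1, e2, hm]
  by_cases hσ1 : σ d₁
  · -- up step
    have hLtrans : ∀ e ∈ S', LL S x σ c e = LL S' x σ (c + 1) e := by
      intro e he
      have hfi1 : (S.filter fun e' => x e < x e' ∧ ¬ σ e') = (S'.filter fun e' => x e < x e' ∧ ¬ σ e') :=
        hsplit_neg (fun e' => x e < x e' ∧ ¬ σ e') (by rintro ⟨-, h⟩; exact h hσ1)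
      have hcard2 : (S.filter fun e' => x e' < x e ∧ σ e').card
          = (S'.filter fun e' => x e' < x e ∧ σ e').card + 1 :=
        hcard_pos (fun e' => x e' < x e ∧ σ e') ⟨h1 e he, hσ1⟩
      simp only [LL, hfi1, hcard2]; ring
    have hfneg : (S.filter fun e => ¬ σ e) = (S'.filter fun e => ¬ σ e) :=
      hsplit_neg (fun e => ¬ σ e) (fun h => h hσ1)
    have IH := ih S' hss x σ (c + 1) hinj'
    have heqU : (S'.filter fun d => σ d ∧ LL S x σ c d = k)
        = (S'.filter fun d => σ d ∧ LL S' x σ (c+1) d = k) :=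
      Finset.filter_congr (fun d hd => by rw [hLtrans d hd])
    have heqD : (S'.filter fun d => ¬ σ d ∧ LL S x σ c d = k)
        = (S'.filter fun d => ¬ σ d ∧ LL S' x σ (c+1) d = k) :=
      Finset.filter_congr (fun d hd => by rw [hLtrans d hd])
    have hup : (S.filter fun d => σ d ∧ LL S x σ c d = k).card
        = (if c + m = k then 1 else 0) + (S'.filter fun d => σ d ∧ LL S' x σ (c+1) d = k).card := by
      by_cases hk : c + m = k
      · rw [hcard_pos (fun d => σ d ∧ LL S x σ c d = k) ⟨hσ1, hLd₁.trans hk⟩, heqU, if_pos hk]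
        ring
      · rw [hsplit_neg (fun d => σ d ∧ LL S x σ c d = k) (fun h => hk (hLd₁.symm.trans h.2)),
          heqU, if_neg hk]
        ring
    have hdown : (S.filter fun d => ¬ σ d ∧ LL S x σ c d = k).card
        = (S'.filter fun d => ¬ σ d ∧ LL S' x σ (c+1) d = k).card := by
      rw [hsplit_neg (fun d => ¬ σ d ∧ LL S x σ c d = k) (fun h => h.1 hσ1), heqD]
    rw [hfneg, hup, hdown]
    constructor
    · intro hle
      by_cases hk : c + m = k
      · rcases IH.2 (by omega) with h | h
        · left; rw [if_pos hk]; push_cast at h ⊢; omega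
        · right; rw [if_pos hk]; push_cast at h ⊢; omega
      · rw [if_neg hk]
        have := IH.1 (by omega)
        push_cast at this ⊢; omega
    · intro hlt
      rw [if_neg (by omega : ¬ c + m = k)]
      have := IH.2 (by omega)
      push_cast at this ⊢; omega
  · -- down step
    have hLtrans : ∀ e ∈ S', LL S x σ c e = LL S' x σ c e := by
      intro e he
      have hfi1 : (S.filter fun e' => x e < x e' ∧ ¬ σ e') = (S'.filter fun e' => x e < x e' ∧ ¬ σ e') :=
        hsplit_neg (fun e' => x e < x e' ∧ ¬ σ e')
          (by rintro ⟨hlt, -⟩; exact absurd (h1 e he) (not_lt_of_gt hlt))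
      have hfi2 : (S.filter fun e' => x e' < x e ∧ σ e') = (S'.filter fun e' => x e' < x e ∧ σ e') :=
        hsplit_neg (fun e' => x e' < x e ∧ σ e') (fun h => hσ1 h.2)
      simp only [LL, hfi1, hfi2]
    have hfnegcard : (S.filter fun e => ¬ σ e).card = m + 1 :=
      hcard_pos (fun e => ¬ σ e) hσ1
    have IH := ih S' hss x σ c hinj'
    have heqU : (S'.filter fun d => σ d ∧ LL S x σ c d = k)
        = (S'.filter fun d => σ d ∧ LL S' x σ c d = k) :=
      Finset.filter_congr (fun d hd => by rw [hLtrans d hd])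
    have heqD : (S'.filter fun d => ¬ σ d ∧ LL S x σ c d = k)
        = (S'.filter fun d => ¬ σ d ∧ LL S' x σ c d = k) :=
      Finset.filter_congr (fun d hd => by rw [hLtrans d hd])
    have hup : (S.filter fun d => σ d ∧ LL S x σ c d = k).card
        = (S'.filter fun d => σ d ∧ LL S' x σ c d = k).card := by
      rw [hsplit_neg (fun d => σ d ∧ LL S x σ c d = k) (fun h => hσ1 h.1), heqU]
    have hdown : (S.filter fun d => ¬ σ d ∧ LL S x σ c d = k).card
        = (if c + m = k then 1 else 0) + (S'.filter fun d => ¬ σ d ∧ LL S' x σ c d = k).card := by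
      by_cases hk : c + m = k
      · rw [hcard_pos (fun d => ¬ σ d ∧ LL S x σ c d = k) ⟨hσ1, hLd₁.trans hk⟩, heqD, if_pos hk]
        ring
      · rw [hsplit_neg (fun d => ¬ σ d ∧ LL S x σ c d = k) (fun h => hk (hLd₁.symm.trans h.2)),
          heqD, if_neg hk]
        ring
    rw [hfnegcard, hup, hdown]
    constructor
    · intro hle
      rw [if_neg (by omega : ¬ c + m = k)]
      have := IH.1 (by omega)
      push_cast at this ⊢; omega
    · intro hlt
      by_cases hk : c + m = k
      · rw [if_pos hk]
        have := IH.1 (by omega)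
        push_cast at this ⊢; omega
      · rw [if_neg hk]
        have := IH.2 (by omega)
        push_cast at this ⊢; omega


lemma sign_iff_of_no_root {g : ℝ → ℝ} (hg : Continuous g) {u v : ℝ} (huv : u ≤ v)
    (h : ∀ t, u ≤ t → t ≤ v → g t ≠ 0) : (0 < g u ↔ 0 < g v) := by
  constructor
  · intro hu
    by_contra hv
    have hv' : g v < 0 :=
      lt_of_le_of_ne (not_lt.1 hv) (h v huv le_rfl)
    obtain ⟨t, ht, ht0⟩ := intermediate_value_Icc' huv hg.continuousOn ⟨hv'.le, hu.le⟩
    exact h t ht.1 ht.2 ht0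
  · intro hv
    by_contra hu
    have hu' : g u < 0 :=
      lt_of_le_of_ne (not_lt.1 hu) (h u le_rfl huv)
    obtain ⟨t, ht, ht0⟩ := intermediate_value_Icc huv hg.continuousOn ⟨hu'.le, hv.le⟩
    exact h t ht.1 ht.2 ht0

lemma sided {g : ℝ → ℝ} (hg : Continuous g) {x0 : ℝ} (hz : ∀ x, g x = 0 ↔ x = x0)
    (hneg : ∃ x, g x < 0) (hpos : ∃ x, 0 < g x) :
    (∀ u v, u < x0 → v < x0 → (0 < g u ↔ 0 < g v)) ∧
    (∀ u v, x0 < u → x0 < v → (0 < g u ↔ 0 < g v)) ∧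
    (∀ u v, u < x0 → x0 < v → (0 < g u ↔ g v < 0)) := by
  have hne : ∀ t, t ≠ x0 → g t ≠ 0 := fun t ht h => ht ((hz t).1 h)
  have hleft : ∀ u v, u < x0 → v < x0 → (0 < g u ↔ 0 < g v) := by
    intro u v hu hv
    rcases le_total u v with h | h
    · exact sign_iff_of_no_root hg h (fun t h1 h2 => hne t (ne_of_lt (lt_of_le_of_lt h2 hv)))
    · exact (sign_iff_of_no_root hg h (fun t h1 h2 => hne t (ne_of_lt (lt_of_le_of_lt h2 hu)))).symm
  have hright : ∀ u v, x0 < u → x0 < v → (0 < g u ↔ 0 < g v) := by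
    intro u v hu hv
    rcases le_total u v with h | h
    · exact sign_iff_of_no_root hg h (fun t h1 h2 => hne t (ne_of_gt (lt_of_lt_of_le hu h1)))
    · exact (sign_iff_of_no_root hg h (fun t h1 h2 => hne t (ne_of_gt (lt_of_lt_of_le hv h1)))).symm
  refine ⟨hleft, hright, ?_⟩
  intro u v hu hv
  have hgu := hne u (ne_of_lt hu)
  have hgv := hne v (ne_of_gt hv)
  constructor
  · intro h0u
    rcases hgv.lt_or_gt with h | h
    · exact h
    · exfalso
      obtain ⟨w, hw⟩ := hneg
      have hwne : w ≠ x0 := fun hwx => by rw [hwx] at hw; rw [(hz x0).2 rfl] at hw; exact lt_irrefl 0 hw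
      rcases hwne.lt_or_gt with hwlt | hwgt
      · exact absurd ((hleft u w hu hwlt).1 h0u) (not_lt.2 hw.le)
      · exact absurd ((hright v w hv hwgt).1 h) (not_lt.2 hw.le)
  · intro h0v
    rcases hgu.lt_or_gt with h | h
    · exfalso
      obtain ⟨w, hw⟩ := hpos
      have hwne : w ≠ x0 := fun hwx => by rw [hwx] at hw; rw [(hz x0).2 rfl] at hw; exact lt_irrefl 0 hw
      rcases hwne.lt_or_gt with hwlt | hwgt
      · exact absurd ((hleft w u hwlt hu).1 hw) (not_lt.2 h.le)
      · exact absurd ((hright w v hwgt hv).1 hw) (not_lt.2 h0v.le)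
    · exact h

/-- Antipodality for pseudoplanes: Let `Λ` be a family of `n` pseudoplanes in
general position in ℝ³, `k` a nonnegative integer, `a ≠ b` in `Λ`, and `p = (px,py,pz)` a
point of `γ_{a,b}` not lying on any pseudoplane of `D = Λ \ {a,b}`. With
`D^k = {d ∈ D : C_{a,b,d} ∈ C^k}`, `h_up` (resp. `h_down`) the pseudoplanes crossing the
vertical line through `p` above (resp. below) `p`, we have
`| |h_up ∩ D^k| − |h_down ∩ D^k| | ≤ 2`. -/
theorem statement8 (Λ : Finset PP) (k : ℕ) (hΛ : PseudoplaneFamily Λ)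
    (a b : PP) (ha : a ∈ Λ) (hb : b ∈ Λ) (hab : a ≠ b)
    (px py pz : ℝ) (hpa : a px py = pz) (hpb : b px py = pz)
    (hgen : ∀ d ∈ Λ \ {a, b}, d px py ≠ pz) :
    |((((Λ \ {a, b}).filter fun d =>
          pz < d px py ∧ IsKCorridorTriple Λ k {a, b, d}).card : ℤ) -
      (((Λ \ {a, b}).filter fun d =>
          d px py < pz ∧ IsKCorridorTriple Λ k {a, b, d}).card : ℤ))| ≤ 2 := by
  obtain ⟨hcont, hcurve, htriple, _hpseudo, hfour, _htang, hboth⟩ := hΛ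
  obtain ⟨φ, hφ⟩ := hcurve a ha b hb hab
  have hφc : Continuous φ := hφ.1
  have hgr : ∀ x y, a x y = b x y ↔ y = φ x := hφ.2
  set D : Finset PP := Λ \ {a, b} with hD
  have hmemD : ∀ d, d ∈ D ↔ d ∈ Λ ∧ d ≠ a ∧ d ≠ b := by
    intro d
    simp [hD, Finset.mem_sdiff, Finset.mem_insert, Finset.mem_singleton, not_or]
  have hpy : py = φ px := (hgr px py).1 (hpa.trans hpb.symm)
  set g : PP → ℝ → ℝ := fun d x => d x (φ x) - a x (φ x) with hg
  have hgcont : ∀ d ∈ Λ, Continuous (g d) := by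
    intro d hd
    have h1 : Continuous fun x : ℝ => d x (φ x) :=
      (hcont d hd).comp (continuous_id.prodMk hφc)
    have h2 : Continuous fun x : ℝ => a x (φ x) :=
      (hcont a ha).comp (continuous_id.prodMk hφc)
    exact h1.sub h2
  have habz : ∀ x, b x (φ x) = a x (φ x) := fun x => ((hgr x (φ x)).2 rfl).symm
  -- unique root of g d for d ∈ D
  have hexu : ∀ d : PP, d ∈ D → ∃ x0 : ℝ, ∀ x, g d x = 0 ↔ x = x0 := by
    intro d hd
    obtain ⟨hdΛ, hda, hdb⟩ := (hmemD d).1 hd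
    obtain ⟨q, ⟨hq1, hq2⟩, huniq⟩ := htriple a ha b hb d hdΛ hab (Ne.symm hda) (Ne.symm hdb)
    refine ⟨q.1, fun x => ⟨?_, ?_⟩⟩
    · intro hx
      have hab' : a x (φ x) = b x (φ x) := (hgr x (φ x)).2 rfl
      have had : a x (φ x) = d x (φ x) := by
        have hx' : d x (φ x) - a x (φ x) = 0 := hx
        linarith
      exact congrArg Prod.fst (huniq (x, φ x) ⟨hab', had⟩)
    · intro hx
      subst hx
      have hq2' : q.2 = φ q.1 := (hgr q.1 q.2).1 hq1
      show d q.1 (φ q.1) - a q.1 (φ q.1) = 0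
      rw [← hq2']
      linarith [hq2]
  choose! X hX using hexu
  have hgboth : ∀ d ∈ D, (∃ x, g d x < 0) ∧ (∃ x, 0 < g d x) := by
    intro d hd
    obtain ⟨hdΛ, hda, hdb⟩ := (hmemD d).1 hd
    obtain ⟨⟨x1, h1⟩, ⟨x2, h2⟩⟩ :=
      hboth a ha b hb d hdΛ hab (Ne.symm hda) (Ne.symm hdb) φ hφ
    exact ⟨⟨x1, by show d x1 (φ x1) - a x1 (φ x1) < 0; linarith⟩,
           ⟨x2, by show 0 < d x2 (φ x2) - a x2 (φ x2); linarith⟩⟩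
  have hsided : ∀ d ∈ D,
      (∀ u v, u < X d → v < X d → (0 < g d u ↔ 0 < g d v)) ∧
      (∀ u v, X d < u → X d < v → (0 < g d u ↔ 0 < g d v)) ∧
      (∀ u v, u < X d → X d < v → (0 < g d u ↔ g d v < 0)) := fun d hd =>
    sided (hgcont d ((hmemD d).1 hd).1) (hX d hd) ((hgboth d hd).1) ((hgboth d hd).2)
  have hltiff : ∀ t : ℝ, t ≠ 0 → (t < 0 ↔ ¬ 0 < t) :=
    fun t ht => ⟨fun h h' => absurd h (asymm h'), fun h => ht.lt_or_gt.resolve_right h⟩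
  have hroot_ne : ∀ d ∈ D, ∀ x, x ≠ X d → g d x ≠ 0 :=
    fun d hd x hx h => hx ((hX d hd x).1 h)
  have hpza : pz = a px (φ px) := by rw [← hpy, hpa]
  have hgpx : ∀ d ∈ D, g d px ≠ 0 := by
    intro d hd h
    have : d px (φ px) - a px (φ px) = 0 := h
    exact hgen d hd (by rw [← hpy] at this; linarith [hpza])
  have hXne : ∀ d ∈ D, X d ≠ px := by
    intro d hd h
    exact hgpx d hd ((hX d hd px).2 h.symm)
  -- injectivity of X on D
  have hXinj : Set.InjOn X D := by
    intro d hd' e he' hde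
    have hd : d ∈ D := hd'
    have he : e ∈ D := he'
    by_contra hne
    obtain ⟨hdΛ, hda, hdb⟩ := (hmemD d).1 hd
    obtain ⟨heΛ, hea, heb⟩ := (hmemD e).1 he
    apply hfour a ha b hb d hdΛ e heΛ hab (Ne.symm hda) (Ne.symm hea) (Ne.symm hdb)
      (Ne.symm heb) hne
    refine ⟨X d, φ (X d), (habz (X d)).symm, ?_, ?_⟩
    · have := (hX d hd (X d)).2 rfl
      have : d (X d) (φ (X d)) - a (X d) (φ (X d)) = 0 := this
      linarith
    · have := (hX e he (X e)).2 rfl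
      have h2 : e (X e) (φ (X e)) - a (X e) (φ (X e)) = 0 := this
      rw [hde]
      linarith
  -- level along the curve
  set Lc : ℝ → ℕ := fun x => (D.filter fun e => g e x < 0).card with hLc
  have hlevel : ∀ x, level Λ x (φ x) (a x (φ x)) = Lc x := by
    intro x
    have h1 : (Λ.filter fun e => e x (φ x) < a x (φ x))
        = (D.filter fun e => e x (φ x) < a x (φ x)) := by
      ext e
      simp only [Finset.mem_filter, hmemD]
      constructor
      · rintro ⟨heΛ, hlt⟩
        refine ⟨⟨heΛ, ?_, ?_⟩, hlt⟩
        · rintro rfl; exact lt_irrefl _ hlt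
        · rintro rfl; rw [habz x] at hlt; exact lt_irrefl _ hlt
      · rintro ⟨⟨heΛ, -, -⟩, hlt⟩; exact ⟨heΛ, hlt⟩
    have h2 : (D.filter fun e => e x (φ x) < a x (φ x))
        = (D.filter fun e => g e x < 0) := by
      apply Finset.filter_congr
      intro e _
      show e x (φ x) < a x (φ x) ↔ e x (φ x) - a x (φ x) < 0
      constructor <;> intro <;> linarith
    show (Λ.filter fun e => e x (φ x) < a x (φ x)).card = _
    rw [h1, h2]
  -- corridor characterization
  have hcorr : ∀ d ∈ D, (IsKCorridorTriple Λ k {a, b, d} ↔ Lc (X d) = k) := by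
    intro d hd
    constructor
    · rintro ⟨x, y, z, hmem, hlev⟩
      have hxa : a x y = z := hmem a (by simp)
      have hxb : b x y = z := hmem b (by simp)
      have hxd : d x y = z := hmem d (by simp)
      have hyx : y = φ x := (hgr x y).1 (hxa.trans hxb.symm)
      subst hyx
      have hgd0 : g d x = 0 := by
        show d x (φ x) - a x (φ x) = 0
        rw [hxa, hxd]; ring
      have hxX : x = X d := (hX d hd x).1 hgd0
      subst hxX
      rw [← hxa] at hlev
      rw [hlevel] at hlev
      exact hlev
    · intro hk
      refine ⟨X d, φ (X d), a (X d) (φ (X d)), ?_, ?_⟩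
      · intro f hf
        rcases Finset.mem_insert.1 hf with rfl | hf'
        · rfl
        rcases Finset.mem_insert.1 hf' with rfl | hf''
        · exact habz (X d)
        · rw [Finset.mem_singleton.1 hf'']
          have : d (X d) (φ (X d)) - a (X d) (φ (X d)) = 0 := (hX d hd (X d)).2 rfl
          linarith
      · rw [hlevel]; exact hk
  -- sigma and the two sides
  set σ : PP → Prop := fun d => 0 < g d px with hσ
  set SR : Finset PP := D.filter fun d => px < X d with hSR
  set SL : Finset PP := D.filter fun d => X d < px with hSL
  have hSRD : ∀ e ∈ SR, e ∈ D ∧ px < X e := fun e he => Finset.mem_filter.1 he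
  have hSLD : ∀ e ∈ SL, e ∈ D ∧ X e < px := fun e he => Finset.mem_filter.1 he
  -- splitting cardinalities over D
  have hDsplit : ∀ (p : PP → Prop) (_ : DecidablePred p),
      (D.filter p).card = (SL.filter p).card + (SR.filter p).card := by
    intro p _
    have h0 : ((D.filter p).filter fun e => X e < px).card
        + ((D.filter p).filter fun e => ¬ (X e < px)).card = (D.filter p).card :=
      Finset.card_filter_add_card_filter_not _
    have hL : (D.filter p).filter (fun e => X e < px) = SL.filter p := by
      rw [hSL]
      ext e
      simp only [Finset.mem_filter]
      tauto
    have hR : (D.filter p).filter (fun e => ¬ (X e < px)) = SR.filter p := by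
      rw [hSR]
      ext e
      simp only [Finset.mem_filter]
      constructor
      · rintro ⟨⟨heD, hpe⟩, hnlt⟩
        exact ⟨⟨heD, (hXne e heD).lt_or_gt.resolve_left hnlt⟩, hpe⟩
      · rintro ⟨⟨heD, hgt⟩, hpe⟩
        exact ⟨⟨heD, hpe⟩, fun h => absurd h (asymm hgt)⟩
    rw [← h0, hL, hR]
  -- the level formula on the right side
  set cR : ℕ := (SL.filter fun e => ¬ σ e).card with hcR
  set cL : ℕ := (SR.filter fun e => ¬ σ e).card with hcL
  have hLright : ∀ d ∈ SR, Lc (X d) = LL SR X σ cR d := by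
    intro d hd
    obtain ⟨hdD, hdx⟩ := hSRD d hd
    have hsplit := hDsplit (fun e => g e (X d) < 0) (fun e => Classical.propDecidable _)
    have hLpart : SL.filter (fun e => g e (X d) < 0) = SL.filter (fun e => ¬ σ e) := by
      apply Finset.filter_congr
      intro e he
      obtain ⟨heD, hex⟩ := hSLD e he
      have hs := (hsided e heD).2.1 px (X d) (by linarith) (by linarith)
      have hne : g e (X d) ≠ 0 := hroot_ne e heD (X d) (by intro h; rw [h] at hdx; linarith)
      rw [hltiff _ hne, hσ]
      exact not_congr hs.symm
    have hRpart : (SR.filter fun e => g e (X d) < 0).card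
        = (SR.filter fun e => X d < X e ∧ ¬ σ e).card
          + (SR.filter fun e => X e < X d ∧ σ e).card := by
      have heq : SR.filter (fun e => g e (X d) < 0)
          = SR.filter (fun e => (X d < X e ∧ ¬ σ e) ∨ (X e < X d ∧ σ e)) := by
        apply Finset.filter_congr
        intro e he
        obtain ⟨heD, hex⟩ := hSRD e he
        rcases lt_trichotomy (X e) (X d) with hlt | heqx | hgt
        · -- px < X e < X d : opposite sides of X e
          have hs := (hsided e heD).2.2 px (X d) hex hlt
          have : g e (X d) < 0 ↔ σ e := hs.symm
          simp only [this, hσ]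
          constructor
          · intro h; exact Or.inr ⟨hlt, h⟩
          · rintro (⟨h1, -⟩ | ⟨-, h2⟩)
            · exact absurd hlt (asymm h1)
            · exact h2
        · -- X e = X d : e = d, g d (X d) = 0
          have hed : e = d := hXinj heD hdD heqx
          subst hed
          have h0 : g e (X e) = 0 := (hX e heD (X e)).2 rfl
          rw [heqx] at h0
          simp [h0, heqx, lt_irrefl]
        · -- px < X d < X e : same side (left of X e)
          have hs := (hsided e heD).1 px (X d) (by linarith) hgt
          have hne : g e (X d) ≠ 0 := hroot_ne e heD (X d) (ne_of_lt hgt)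
          rw [hltiff _ hne]
          have : (0 < g e px) ↔ (0 < g e (X d)) := hs
          constructor
          · intro h
            exact Or.inl ⟨hgt, by rw [hσ]; simp only [this]; exact h⟩
          · rintro (⟨-, h2⟩ | ⟨h1, -⟩)
            · rw [hσ] at h2; simp only [this] at h2; exact h2
            · exact absurd hgt (asymm h1)
      rw [heq, Finset.filter_or]
      apply Finset.card_union_of_disjoint
      rw [Finset.disjoint_left]
      intro e h1 h2
      have := (Finset.mem_filter.1 h1).2.1
      have := (Finset.mem_filter.1 h2).2.1
      linarith
    show (D.filter fun e => g e (X d) < 0).card = _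
    rw [hsplit, hLpart, hRpart]
    show cR + _ = cR + _ + _
    ring
  have hLleft : ∀ d ∈ SL, Lc (X d) = LL SL (fun e => - X e) σ cL d := by
    intro d hd
    obtain ⟨hdD, hdx⟩ := hSLD d hd
    have hsplit := hDsplit (fun e => g e (X d) < 0) (fun e => Classical.propDecidable _)
    have hRpart : SR.filter (fun e => g e (X d) < 0) = SR.filter (fun e => ¬ σ e) := by
      apply Finset.filter_congr
      intro e he
      obtain ⟨heD, hex⟩ := hSRD e he
      have hs := (hsided e heD).1 px (X d) (by linarith) (by linarith)
      have hne : g e (X d) ≠ 0 := hroot_ne e heD (X d) (by intro h; rw [h] at hdx; linarith)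
      rw [hltiff _ hne, hσ]
      exact not_congr hs.symm
    have hLpart : (SL.filter fun e => g e (X d) < 0).card
        = (SL.filter fun e => - X d < - X e ∧ ¬ σ e).card
          + (SL.filter fun e => - X e < - X d ∧ σ e).card := by
      have heq : SL.filter (fun e => g e (X d) < 0)
          = SL.filter (fun e => (- X d < - X e ∧ ¬ σ e) ∨ (- X e < - X d ∧ σ e)) := by
        apply Finset.filter_congr
        intro e he
        obtain ⟨heD, hex⟩ := hSLD e he
        rcases lt_trichotomy (X e) (X d) with hlt | heqx | hgt
        · -- X e < X d < px : same side (right of X e)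
          have hs := (hsided e heD).2.1 px (X d) hex hlt
          have hne : g e (X d) ≠ 0 := hroot_ne e heD (X d) (ne_of_gt hlt)
          rw [hltiff _ hne]
          have hiff : (0 < g e px) ↔ (0 < g e (X d)) := hs
          constructor
          · intro h
            refine Or.inl ⟨by linarith, ?_⟩
            rw [hσ]; simp only [hiff]; exact h
          · rintro (⟨-, h2⟩ | ⟨h1, -⟩)
            · rw [hσ] at h2; simp only [hiff] at h2; exact h2
            · linarith
        · have hed : e = d := hXinj heD hdD heqx
          subst hed
          have h0 : g e (X e) = 0 := (hX e heD (X e)).2 rfl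
          rw [heqx] at h0
          simp [h0, heqx, lt_irrefl]
        · -- X d < X e < px : opposite sides of X e (X d left, px right)
          have hs := (hsided e heD).2.2 (X d) px hgt hex
          -- hs : 0 < g e (X d) ↔ g e px < 0
          have hne : g e (X d) ≠ 0 := hroot_ne e heD (X d) (ne_of_lt hgt)
          have hnepx := hgpx e heD
          rw [hltiff _ hne]
          have h2 : ¬ (0 < g e (X d)) ↔ ¬ (g e px < 0) := not_congr hs
          rw [h2, ← hltiff _ hnepx, not_lt ]
          have : (0 ≤ g e px) ↔ σ e := by
            rw [hσ]
            constructor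
            · intro h; exact lt_of_le_of_ne h (Ne.symm hnepx)
            · intro h; exact h.le
          rw [this]
          constructor
          · intro h; exact Or.inr ⟨by linarith, h⟩
          · rintro (⟨h1, -⟩ | ⟨-, h2⟩)
            · linarith
            · exact h2
      rw [heq, Finset.filter_or]
      apply Finset.card_union_of_disjoint
      rw [Finset.disjoint_left]
      intro e h1 h2
      have := (Finset.mem_filter.1 h1).2.1
      have := (Finset.mem_filter.1 h2).2.1
      linarith
    show (D.filter fun e => g e (X d) < 0).card = _
    rw [hsplit, hRpart, hLpart]
    simp only [LL, Finset.filter_congr_decidable, ← hcL]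
    ring
  -- translate the filters
  have hgpx_eq : ∀ d : PP, g d px = d px py - pz := by
    intro d
    show d px (φ px) - a px (φ px) = d px py - pz
    rw [← hpy, hpa]
  have hupIff : ∀ d ∈ D,
      ((pz < d px py ∧ IsKCorridorTriple Λ k {a, b, d}) ↔ (σ d ∧ Lc (X d) = k)) := by
    intro d hd
    apply and_congr _ (hcorr d hd)
    show pz < d px py ↔ 0 < g d px
    rw [hgpx_eq d]
    constructor <;> intro <;> linarith
  have hdnIff : ∀ d ∈ D,
      ((d px py < pz ∧ IsKCorridorTriple Λ k {a, b, d}) ↔ (¬ σ d ∧ Lc (X d) = k)) := by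
    intro d hd
    apply and_congr _ (hcorr d hd)
    show d px py < pz ↔ ¬ (0 < g d px)
    rw [← hltiff _ (hgpx d hd), hgpx_eq d]
    constructor <;> intro <;> linarith
  have hU : (D.filter fun d => pz < d px py ∧ IsKCorridorTriple Λ k {a, b, d})
      = D.filter fun d => σ d ∧ Lc (X d) = k := Finset.filter_congr hupIff
  have hDn : (D.filter fun d => d px py < pz ∧ IsKCorridorTriple Λ k {a, b, d})
      = D.filter fun d => ¬ σ d ∧ Lc (X d) = k := Finset.filter_congr hdnIff
  have hUsplit := hDsplit (fun d => σ d ∧ Lc (X d) = k) (fun d => inferInstance)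
  have hDnsplit := hDsplit (fun d => ¬ σ d ∧ Lc (X d) = k) (fun d => inferInstance)
  have hUR : SR.filter (fun d => σ d ∧ Lc (X d) = k)
      = SR.filter (fun d => σ d ∧ LL SR X σ cR d = k) :=
    Finset.filter_congr (fun d hd => by rw [hLright d hd])
  have hULf : SL.filter (fun d => σ d ∧ Lc (X d) = k)
      = SL.filter (fun d => σ d ∧ LL SL (fun e => - X e) σ cL d = k) :=
    Finset.filter_congr (fun d hd => by rw [hLleft d hd])
  have hDR : SR.filter (fun d => ¬ σ d ∧ Lc (X d) = k)
      = SR.filter (fun d => ¬ σ d ∧ LL SR X σ cR d = k) :=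
    Finset.filter_congr (fun d hd => by rw [hLright d hd])
  have hDL : SL.filter (fun d => ¬ σ d ∧ Lc (X d) = k)
      = SL.filter (fun d => ¬ σ d ∧ LL SL (fun e => - X e) σ cL d = k) :=
    Finset.filter_congr (fun d hd => by rw [hLleft d hd])
  have hSRsub : (SR : Set PP) ⊆ (D : Set PP) := by
    rw [hSR]; exact Finset.coe_subset.2 (Finset.filter_subset _ _)
  have hSLsub : (SL : Set PP) ⊆ (D : Set PP) := by
    rw [hSL]; exact Finset.coe_subset.2 (Finset.filter_subset _ _)
  have hinjR : Set.InjOn X SR := hXinj.mono hSRsub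
  have hinjL : Set.InjOn (fun e => - X e) SL :=
    fun u hu v hv h => hXinj (hSLsub hu) (hSLsub hv) (neg_inj.mp h)
  have combR := comb k SR X σ cR hinjR
  have combL := comb k SL (fun e => - X e) σ cL hinjL
  have hRb : -1 ≤ ((SR.filter fun d => σ d ∧ LL SR X σ cR d = k).card : ℤ)
        - ((SR.filter fun d => ¬ σ d ∧ LL SR X σ cR d = k).card : ℤ) ∧
      ((SR.filter fun d => σ d ∧ LL SR X σ cR d = k).card : ℤ)
        - ((SR.filter fun d => ¬ σ d ∧ LL SR X σ cR d = k).card : ℤ) ≤ 1 := by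
    by_cases hc : cR + (SR.filter fun e => ¬ σ e).card ≤ k
    · rcases combR.1 hc with h | h <;> constructor <;> omega
    · rcases combR.2 (lt_of_not_ge hc) with h | h <;> constructor <;> omega
  have hLb : -1 ≤ ((SL.filter fun d => σ d ∧ LL SL (fun e => - X e) σ cL d = k).card : ℤ)
        - ((SL.filter fun d => ¬ σ d ∧ LL SL (fun e => - X e) σ cL d = k).card : ℤ) ∧
      ((SL.filter fun d => σ d ∧ LL SL (fun e => - X e) σ cL d = k).card : ℤ)
        - ((SL.filter fun d => ¬ σ d ∧ LL SL (fun e => - X e) σ cL d = k).card : ℤ) ≤ 1 := by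
    by_cases hc : cL + (SL.filter fun e => ¬ σ e).card ≤ k
    · rcases combL.1 hc with h | h <;> constructor <;> omega
    · rcases combL.2 (lt_of_not_ge hc) with h | h <;> constructor <;> omega
  rw [hU, hDn, hUsplit, hDnsplit, hUR, hULf, hDR, hDL]
  rw [abs_le]
  push_cast
  constructor <;> linarith [hRb.1, hRb.2, hLb.1, hLb.2]
end
end

section
/- There is an absolute constant C such that for every family Λ of n pseudoplanes in general position in ℝ³, the complexity of the lower envelope of Λ is at most C·n; in particular, the number of unordered triples {a,b,c} ⊆ Λ whose intersection point p_{a,b,c} lies on the lower envelope (i.e., p_{a,b,c} has z-coordinate at most d(x,y) for every d ∈ Λ, where (x,y) is its xy-projection) is at most C·n. -/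
open scoped Classical

noncomputable section

/-- sign constancy along an interval where f never vanishes -/
lemma sign_const {f : ℝ → ℝ} (hf : Continuous f) {a b : ℝ}
    (h0 : ∀ t ∈ Set.uIcc a b, f t ≠ 0) (ha : f a < 0) : f b < 0 := by
  by_contra h
  push_neg at h
  have hb : 0 < f b := lt_of_le_of_ne h (Ne.symm (h0 b Set.right_mem_uIcc))
  have h0m : (0:ℝ) ∈ Set.uIcc (f a) (f b) :=
    Set.mem_uIcc.mpr (Or.inl ⟨le_of_lt ha, le_of_lt hb⟩)
  obtain ⟨t, ht, ht0⟩ := intermediate_value_uIcc hf.continuousOn h0m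
  exact h0 t ht ht0

/-- transport of negativity within the region below the graph of φ -/
lemma transport_below {φ : ℝ → ℝ} (hφ : Continuous φ) {D : ℝ × ℝ → ℝ}
    (hD : Continuous D) (hne : ∀ x y : ℝ, y ≠ φ x → D (x, y) ≠ 0)
    {x₁ y₁ x₂ y₂ : ℝ} (h₁ : y₁ < φ x₁) (h₂ : y₂ < φ x₂)
    (hneg : D (x₁, y₁) < 0) : D (x₂, y₂) < 0 := by
  obtain ⟨t₀, ht₀, hmin'⟩ := isCompact_uIcc.exists_isMinOn Set.nonempty_uIcc
    (hφ.continuousOn (s := Set.uIcc x₁ x₂))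
  have hmin : ∀ t ∈ Set.uIcc x₁ x₂, φ t₀ ≤ φ t := fun t ht => hmin' ht
  set M : ℝ := min (min y₁ y₂) (φ t₀ - 1) with hM
  have hMy₁ : M ≤ y₁ := le_trans (min_le_left _ _) (min_le_left _ _)
  have hMy₂ : M ≤ y₂ := le_trans (min_le_left _ _) (min_le_right _ _)
  have hMφ : ∀ t ∈ Set.uIcc x₁ x₂, M < φ t := fun t ht =>
    lt_of_le_of_lt (min_le_right _ _) (by linarith [hmin t ht])
  -- step 1 : down at x₁
  have s1 : D (x₁, M) < 0 := by
    apply sign_const (f := fun y => D (x₁, y))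
      (hD.comp (continuous_const.prodMk continuous_id)) (a := y₁) (b := M) _ hneg
    intro t ht
    have htle : t ≤ y₁ := by
      rcases Set.mem_uIcc.mp ht with ⟨_, h⟩ | ⟨_, h⟩
      · exact le_trans h hMy₁
      · exact h
    exact hne x₁ t (ne_of_lt (lt_of_le_of_lt htle h₁))
  -- step 2 : across at height M
  have s2 : D (x₂, M) < 0 := by
    apply sign_const (f := fun t => D (t, M))
      (hD.comp (continuous_id.prodMk continuous_const)) (a := x₁) (b := x₂) _ s1
    intro t ht
    exact hne t M (ne_of_lt (hMφ t ht))
  -- step 3 : up at x₂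
  apply sign_const (f := fun y => D (x₂, y))
    (hD.comp (continuous_const.prodMk continuous_id)) (a := M) (b := y₂) _ s2
  intro t ht
  have htle : t ≤ y₂ := by
    rcases Set.mem_uIcc.mp ht with ⟨_, h⟩ | ⟨_, h⟩
    · exact h
    · exact le_trans h hMy₂
  exact hne x₂ t (ne_of_lt (lt_of_le_of_lt htle h₂))

/-- transport of negativity within the region above the graph of φ -/
lemma transport_above {φ : ℝ → ℝ} (hφ : Continuous φ) {D : ℝ × ℝ → ℝ}
    (hD : Continuous D) (hne : ∀ x y : ℝ, y ≠ φ x → D (x, y) ≠ 0)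
    {x₁ y₁ x₂ y₂ : ℝ} (h₁ : φ x₁ < y₁) (h₂ : φ x₂ < y₂)
    (hneg : D (x₁, y₁) < 0) : D (x₂, y₂) < 0 := by
  have := transport_below (φ := fun x => -φ x) hφ.neg
    (D := fun p : ℝ × ℝ => D (p.1, -p.2))
    (hD.comp (continuous_fst.prodMk continuous_snd.neg))
    (fun x y hy => hne x (-y) (fun h => hy (by show y = -φ x; linarith)))
    (x₁ := x₁) (y₁ := -y₁) (x₂ := x₂) (y₂ := -y₂)
    (by simpa using neg_lt_neg h₁) (by simpa using neg_lt_neg h₂)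
    (by simpa using hneg)
  simpa using this

/-- one branch of the dichotomy -/
lemma dichotomy_aux {a b : PP}
    (hca : Continuous fun q : ℝ × ℝ => a q.1 q.2)
    (hcb : Continuous fun q : ℝ × ℝ => b q.1 q.2)
    (hsign : ∃ x y : ℝ, b x y < a x y) {φ : ℝ → ℝ} (hφ : IsGraphFun a b φ)
    (href : a 0 (φ 0 - 1) < b 0 (φ 0 - 1)) :
    (∀ x y, y < φ x → a x y < b x y) ∧ (∀ x y, φ x < y → b x y < a x y) := by
  set D : ℝ × ℝ → ℝ := fun p => a p.1 p.2 - b p.1 p.2 with hD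
  have hDc : Continuous D := hca.sub hcb
  have hne : ∀ x y : ℝ, y ≠ φ x → D (x, y) ≠ 0 := by
    intro x y hy h0
    exact hy ((hφ.2 x y).mp (by simpa [hD, sub_eq_zero] using h0))
  have hrefb : (φ 0 - 1 : ℝ) < φ 0 := by linarith
  have hnegref : D (0, φ 0 - 1) < 0 := by simpa [hD, sub_neg] using href
  constructor
  · intro x y hxy
    have := transport_below hφ.1 hDc hne hrefb hxy hnegref
    simpa [hD, sub_neg] using this
  · -- find a point strictly above with b < a
    obtain ⟨x', y', hba⟩ := hsign
    have hyφ : φ x' < y' := by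
      rcases lt_trichotomy y' (φ x') with h | h | h
      · have := transport_below hφ.1 hDc hne hrefb h hnegref
        have : a x' y' < b x' y' := by simpa [hD, sub_neg] using this
        linarith
      · exact absurd ((hφ.2 x' y').mpr h) (by intro he; linarith)
      · exact h
    intro x y hxy
    have hposref : (fun p : ℝ × ℝ => -D p) (x', y') < 0 := by simp [hD]; linarith
    have := transport_above hφ.1 hDc.neg
      (fun x y hy => neg_ne_zero.mpr (hne x y hy)) hyφ hxy hposref
    have : 0 < D (x, y) := by simpa using this
    simpa [hD, sub_pos] using this

/-- the sign dichotomy for two pseudoplanes -/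
lemma dichotomy {a b : PP}
    (hca : Continuous fun q : ℝ × ℝ => a q.1 q.2)
    (hcb : Continuous fun q : ℝ × ℝ => b q.1 q.2)
    (hs1 : ∃ x y : ℝ, a x y < b x y) (hs2 : ∃ x y : ℝ, b x y < a x y)
    {φ : ℝ → ℝ} (hφ : IsGraphFun a b φ) :
    ((∀ x y, y < φ x → a x y < b x y) ∧ (∀ x y, φ x < y → b x y < a x y)) ∨
    ((∀ x y, y < φ x → b x y < a x y) ∧ (∀ x y, φ x < y → a x y < b x y)) := by
  have hφ' : IsGraphFun b a φ := ⟨hφ.1, fun x y => by rw [← hφ.2 x y]; exact eq_comm⟩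
  rcases lt_trichotomy (a 0 (φ 0 - 1)) (b 0 (φ 0 - 1)) with h | h | h
  · exact Or.inl (dichotomy_aux hca hcb hs2 hφ h)
  · have := (hφ.2 0 (φ 0 - 1)).mp h
    linarith
  · exact Or.inr (dichotomy_aux hcb hca hs1 hφ' h)


/-- the x-projection of the part of the lower envelope belonging to `m` -/
def Emset (Λ : Finset PP) (m : PP) : Set ℝ := {x | ∃ y, ∀ e ∈ Λ, m x y ≤ e x y}

lemma core {Λ : Finset PP} (hfam : PseudoplaneFamily Λ) {P₁ m P₃ : PP}
    (h₁ : P₁ ∈ Λ) (hm : m ∈ Λ) (h₃ : P₃ ∈ Λ)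
    (h1m : P₁ ≠ m) (hm3 : m ≠ P₃) (h13 : P₁ ≠ P₃)
    {x₀ y₀ : ℝ} (e1 : P₁ x₀ y₀ = m x₀ y₀) (e3 : P₃ x₀ y₀ = m x₀ y₀)
    (o1 : P₁ x₀ (y₀ - 1) < m x₀ (y₀ - 1)) (o3 : m x₀ (y₀ - 1) < P₃ x₀ (y₀ - 1)) :
    (∀ y : ℝ, (∀ e ∈ Λ, m x₀ y ≤ e x₀ y) → y = y₀) ∧
    ((∀ x ∈ Emset Λ m, x₀ ≤ x) ∨ (∀ x ∈ Emset Λ m, x ≤ x₀)) := by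
  obtain ⟨hcont, h2, h3, h4, h5, h6, h7⟩ := hfam
  -- graph functions for the two pairs (m, P₁) and (m, P₃)
  obtain ⟨φ₁, hφ₁⟩ := h2 m hm P₁ h₁ (Ne.symm h1m)
  obtain ⟨φ₃, hφ₃⟩ := h2 m hm P₃ h₃ hm3
  have hφ₁x₀ : φ₁ x₀ = y₀ := ((hφ₁.2 x₀ y₀).mp e1.symm).symm
  have hφ₃x₀ : φ₃ x₀ = y₀ := ((hφ₃.2 x₀ y₀).mp e3.symm).symm
  -- branch of dichotomy for (m, P₁): below ⇒ P₁ < m , above ⇒ m < P₁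
  have d1 := dichotomy (hcont m hm) (hcont P₁ h₁)
    (h6 m hm P₁ h₁ (Ne.symm h1m)).1 (h6 m hm P₁ h₁ (Ne.symm h1m)).2 hφ₁
  have hbelow₁ : (y₀ - 1 : ℝ) < φ₁ x₀ := by rw [hφ₁x₀]; linarith
  have B₁ : (∀ x y, y < φ₁ x → P₁ x y < m x y) ∧ (∀ x y, φ₁ x < y → m x y < P₁ x y) := by
    rcases d1 with ⟨hb, _⟩ | h
    · exact absurd (hb x₀ (y₀ - 1) hbelow₁) (by linarith)
    · exact h
  -- branch for (m, P₃): below ⇒ m < P₃ , above ⇒ P₃ < m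
  have d3 := dichotomy (hcont m hm) (hcont P₃ h₃)
    (h6 m hm P₃ h₃ hm3).1 (h6 m hm P₃ h₃ hm3).2 hφ₃
  have hbelow₃ : (y₀ - 1 : ℝ) < φ₃ x₀ := by rw [hφ₃x₀]; linarith
  have B₃ : (∀ x y, y < φ₃ x → m x y < P₃ x y) ∧ (∀ x y, φ₃ x < y → P₃ x y < m x y) := by
    rcases d3 with h | ⟨hb, _⟩
    · exact h
    · exact absurd (hb x₀ (y₀ - 1) hbelow₃) (by linarith)
  constructor
  · -- uniqueness of the envelope point of m in the slice x = x₀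
    intro y hy
    rcases lt_trichotomy y y₀ with h | h | h
    · have := B₁.1 x₀ y (by rw [hφ₁x₀]; exact h)
      exact absurd (hy P₁ h₁) (by linarith)
    · exact h
    · have := B₃.2 x₀ y (by rw [hφ₃x₀]; exact h)
      exact absurd (hy P₃ h₃) (by linarith)
  · -- one-sidedness of Emset around x₀
    by_contra hcon
    push_neg at hcon
    obtain ⟨⟨x₂, hx₂E, hx₂⟩, ⟨x₁, hx₁E, hx₁⟩⟩ := hcon
    -- bounds from membership in Emset
    have key : ∀ x ∈ Emset Λ m, φ₁ x ≤ φ₃ x := by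
      rintro x ⟨y, hy⟩
      have hP₁ : m x y ≤ P₁ x y := hy P₁ h₁
      have hP₃ : m x y ≤ P₃ x y := hy P₃ h₃
      have l1 : φ₁ x ≤ y := by
        by_contra hlt
        push_neg at hlt
        exact absurd hP₁ (by linarith [B₁.1 x y hlt])
      have l3 : y ≤ φ₃ x := by
        by_contra hlt
        push_neg at hlt
        exact absurd hP₃ (by linarith [B₃.2 x y hlt])
      linarith
    -- unique crossing of φ₁ and φ₃
    have hpairne : ({m, P₁} : Finset PP) ≠ {m, P₃} := by
      intro h
      have : P₁ ∈ ({m, P₃} : Finset PP) := h ▸ (by simp)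
      simp only [Finset.mem_insert, Finset.mem_singleton] at this
      rcases this with h' | h'
      · exact h1m h'
      · exact h13 h'
    have huniq : ∃! x : ℝ, φ₁ x = φ₃ x :=
      h4 m hm P₁ h₁ m hm P₃ h₃ (Ne.symm h1m) hm3 hpairne φ₁ φ₃ hφ₁ hφ₃
    have hx₀root : φ₁ x₀ = φ₃ x₀ := by rw [hφ₁x₀, hφ₃x₀]
    -- tangency axiom: somewhere on the curve φ₁, P₃ < m, hence φ₃ < φ₁ there
    obtain ⟨xs, hxs⟩ := (h7 m hm P₁ h₁ P₃ h₃ (Ne.symm h1m) hm3 h13 φ₁ hφ₁).1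
    have hxsg : φ₃ xs < φ₁ xs := by
      rcases lt_trichotomy (φ₁ xs) (φ₃ xs) with h | h | h
      · exact absurd (B₃.1 xs (φ₁ xs) h) (by linarith)
      · have : m xs (φ₁ xs) = P₃ xs (φ₁ xs) := (hφ₃.2 xs (φ₁ xs)).mpr h
        linarith
      · exact h
    have hxsne : xs ≠ x₀ := by
      intro h
      rw [h, hφ₁x₀, hφ₃x₀] at hxsg
      exact lt_irrefl _ hxsg
    -- the function g = φ₁ - φ₃
    have hgc : Continuous fun x => φ₁ x - φ₃ x := hφ₁.1.sub hφ₃.1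
    have groot : ∀ t : ℝ, φ₁ t - φ₃ t = 0 → t = x₀ := by
      intro t ht
      exact huniq.unique (by linarith) hx₀root
    -- second root on the side of xs
    rcases lt_or_gt_of_ne hxsne with hside | hside
    · -- xs < x₀ ; use the point of Emset on the left of x₀
      have hE : φ₁ x₂ ≤ φ₃ x₂ := key x₂ hx₂E
      rcases eq_or_lt_of_le hE with h | h
      · exact absurd (groot x₂ (by linarith)) (by intro hh; exact absurd hh (ne_of_lt hx₂))
      · have  hz : (0 : ℝ) ∈ Set.uIcc (φ₁ xs - φ₃ xs) (φ₁ x₂ - φ₃ x₂) :=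
          Set.mem_uIcc.mpr (Or.inr ⟨by linarith, by linarith⟩)
        obtain ⟨t, ht, ht0⟩ := intermediate_value_uIcc hgc.continuousOn hz
        have ht₀ : t = x₀ := groot t ht0
        have : t < x₀ := by
          have := Set.mem_uIcc.mp ht
          rcases this with ⟨_, h'⟩ | ⟨_, h'⟩
          · exact lt_of_le_of_lt h' hx₂
          · exact lt_of_le_of_lt h' hside
        exact absurd ht₀ (ne_of_lt this)
    · -- x₀ < xs ; use the point of Emset on the right of x₀
      have hE : φ₁ x₁ ≤ φ₃ x₁ := key x₁ hx₁E
      rcases eq_or_lt_of_le hE with h | h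
      · exact absurd (groot x₁ (by linarith)) (by intro hh; exact absurd hh (ne_of_gt hx₁))
      · have hz : (0 : ℝ) ∈ Set.uIcc (φ₁ xs - φ₃ xs) (φ₁ x₁ - φ₃ x₁) :=
          Set.mem_uIcc.mpr (Or.inr ⟨by linarith, by linarith⟩)
        obtain ⟨t, ht, ht0⟩ := intermediate_value_uIcc hgc.continuousOn hz
        have ht₀ : t = x₀ := groot t ht0
        have : x₀ < t := by
          rcases Set.mem_uIcc.mp ht with ⟨h', _⟩ | ⟨h', _⟩
          · exact lt_of_lt_of_le hside h'
          · exact lt_of_lt_of_le hx₁ h'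
        exact absurd ht₀ (ne_of_gt this)

def Good (Λ : Finset PP) (m : PP) (σ : Bool) (s : Finset PP) : Prop :=
  s ⊆ Λ ∧ s.card = 3 ∧ m ∈ s ∧
  ∃ x₀ y₀ : ℝ,
    (∀ u ∈ s, u x₀ y₀ = m x₀ y₀) ∧
    (∀ e ∈ Λ, m x₀ y₀ ≤ e x₀ y₀) ∧
    (∀ y : ℝ, (∀ e ∈ Λ, m x₀ y ≤ e x₀ y) → y = y₀) ∧
    (σ = true → ∀ x ∈ Emset Λ m, x₀ ≤ x) ∧
    (σ = false → ∀ x ∈ Emset Λ m, x ≤ x₀)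

/-- distinct pseudoplanes that agree at `(x₀, y₀)` differ at `(x₀, y₀ - 1)` -/
lemma ref_ne {Λ : Finset PP} (hfam : PseudoplaneFamily Λ) {u v : PP}
    (hu : u ∈ Λ) (hv : v ∈ Λ) (huv : u ≠ v) {x₀ y₀ : ℝ}
    (heq : u x₀ y₀ = v x₀ y₀) : u x₀ (y₀ - 1) ≠ v x₀ (y₀ - 1) := by
  obtain ⟨φ, hφ⟩ := hfam.2.1 u hu v hv huv
  have h1 : y₀ = φ x₀ := (hφ.2 x₀ y₀).mp heq
  intro h
  have h2 : y₀ - 1 = φ x₀ := (hφ.2 x₀ (y₀ - 1)).mp h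
  linarith

lemma buildGood {Λ : Finset PP} (hfam : PseudoplaneFamily Λ) {s : Finset PP}
    (hsub : s ⊆ Λ) (hcard : s.card = 3) {P₁ m P₃ : PP}
    (hmem1 : P₁ ∈ s) (hmemm : m ∈ s) (hmem3 : P₃ ∈ s)
    (h1m : P₁ ≠ m) (hm3 : m ≠ P₃) (h13 : P₁ ≠ P₃)
    {x₀ y₀ z₀ : ℝ} (hall : ∀ u ∈ s, u x₀ y₀ = z₀) (hminz : ∀ d ∈ Λ, z₀ ≤ d x₀ y₀)
    (o1 : P₁ x₀ (y₀ - 1) < m x₀ (y₀ - 1)) (o3 : m x₀ (y₀ - 1) < P₃ x₀ (y₀ - 1)) :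
    ∃ σ : Bool, Good Λ m σ s := by
  have hmz : m x₀ y₀ = z₀ := hall m hmemm
  have e1 : P₁ x₀ y₀ = m x₀ y₀ := by rw [hall P₁ hmem1, hmz]
  have e3 : P₃ x₀ y₀ = m x₀ y₀ := by rw [hall P₃ hmem3, hmz]
  obtain ⟨huy, hside⟩ := core hfam (hsub hmem1) (hsub hmemm) (hsub hmem3)
    h1m hm3 h13 e1 e3 o1 o3
  have hminm : ∀ e ∈ Λ, m x₀ y₀ ≤ e x₀ y₀ := by
    intro e he; rw [hmz]; exact hminz e he
  have hallm : ∀ u ∈ s, u x₀ y₀ = m x₀ y₀ := by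
    intro u hu; rw [hall u hu, hmz]
  rcases hside with h | h
  · exact ⟨true, hsub, hcard, hmemm, x₀, y₀, hallm, hminm, huy,
      fun _ => h, fun hc => by simp at hc⟩
  · exact ⟨false, hsub, hcard, hmemm, x₀, y₀, hallm, hminm, huy,
      fun hc => by simp at hc, fun _ => h⟩

lemma main₁ {Λ : Finset PP} (hfam : PseudoplaneFamily Λ) {s : Finset PP}
    (hsub : s ⊆ Λ) (hcard : s.card = 3)
    (hv : ∃ x y z : ℝ, (∀ a ∈ s, a x y = z) ∧ ∀ d ∈ Λ, z ≤ d x y) :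
    ∃ m σ, Good Λ m σ s := by
  obtain ⟨x₀, y₀, z₀, hall, hmin⟩ := hv
  obtain ⟨a, b, c, hab, hac, hbc, rfl⟩ := Finset.card_eq_three.mp hcard
  have ha : a ∈ ({a, b, c} : Finset PP) := by simp
  have hb : b ∈ ({a, b, c} : Finset PP) := by simp
  have hc : c ∈ ({a, b, c} : Finset PP) := by simp
  have hea : a x₀ y₀ = z₀ := hall a ha
  have heb : b x₀ y₀ = z₀ := hall b hb
  have hec : c x₀ y₀ = z₀ := hall c hc
  have nab : a x₀ (y₀-1) ≠ b x₀ (y₀-1) :=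
    ref_ne hfam (hsub ha) (hsub hb) hab (by rw [hea, heb])
  have nac : a x₀ (y₀-1) ≠ c x₀ (y₀-1) :=
    ref_ne hfam (hsub ha) (hsub hc) hac (by rw [hea, hec])
  have nbc : b x₀ (y₀-1) ≠ c x₀ (y₀-1) :=
    ref_ne hfam (hsub hb) (hsub hc) hbc (by rw [heb, hec])
  rcases lt_or_gt_of_ne nab with h1 | h1
  · rcases lt_or_gt_of_ne nbc with h2 | h2
    · -- a < b < c : median b
      obtain ⟨σ, hg⟩ := buildGood hfam hsub hcard ha hb hc hab hbc hac hall hmin h1 h2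
      exact ⟨b, σ, hg⟩
    · rcases lt_or_gt_of_ne nac with h3 | h3
      · -- a < c < b : median c
        obtain ⟨σ, hg⟩ := buildGood hfam hsub hcard ha hc hb hac (Ne.symm hbc) hab hall hmin h3 h2
        exact ⟨c, σ, hg⟩
      · -- c < a < b : median a
        obtain ⟨σ, hg⟩ := buildGood hfam hsub hcard hc ha hb (Ne.symm hac) hab (Ne.symm hbc) hall hmin h3 h1
        exact ⟨a, σ, hg⟩
  · rcases lt_or_gt_of_ne nac with h2 | h2
    · -- b < a < c : median a
      obtain ⟨σ, hg⟩ := buildGood hfam hsub hcard hb ha hc (Ne.symm hab) hac hbc hall hmin h1 h2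
      exact ⟨a, σ, hg⟩
    · rcases lt_or_gt_of_ne nbc with h3 | h3
      · -- b < c < a : median c
        obtain ⟨σ, hg⟩ := buildGood hfam hsub hcard hb hc ha hbc (Ne.symm hac) (Ne.symm hab) hall hmin h3 h2
        exact ⟨c, σ, hg⟩
      · -- c < b < a : median b
        obtain ⟨σ, hg⟩ := buildGood hfam hsub hcard hc hb ha (Ne.symm hbc) (Ne.symm hab) (Ne.symm hac) hall hmin h3 h1
        exact ⟨b, σ, hg⟩

lemma main₂ {Λ : Finset PP} (hfam : PseudoplaneFamily Λ) {m : PP} {σ : Bool}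
    {s t : Finset PP} (hs : Good Λ m σ s) (ht : Good Λ m σ t) : s = t := by
  obtain ⟨hssub, hscard, hms, x₀, y₀, hall, hmin, huy, hT, hF⟩ := hs
  obtain ⟨htsub, htcard, hmt, x₁, y₁, hall', hmin', huy', hT', hF'⟩ := ht
  have hx₀E : x₀ ∈ Emset Λ m := ⟨y₀, hmin⟩
  have hx₁E : x₁ ∈ Emset Λ m := ⟨y₁, hmin'⟩
  have hxeq : x₀ = x₁ := by
    cases σ with
    | true => exact le_antisymm (hT rfl x₁ hx₁E) (hT' rfl x₀ hx₀E)
    | false => exact le_antisymm (hF' rfl x₀ hx₀E) (hF rfl x₁ hx₁E)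
  subst hxeq
  have hyeq : y₁ = y₀ := huy y₁ hmin'
  subst hyeq
  by_contra hne
  have : ∃ e ∈ t, e ∉ s := by
    by_contra hsub'
    push_neg at hsub'
    exact hne (Finset.eq_of_subset_of_card_le hsub' (by rw [hscard, htcard])).symm
  obtain ⟨e, het, hes⟩ := this
  obtain ⟨a, b, c, hab, hac, hbc, hs3⟩ := Finset.card_eq_three.mp hscard
  have ha : a ∈ s := by rw [hs3]; simp
  have hb : b ∈ s := by rw [hs3]; simp
  have hc : c ∈ s := by rw [hs3]; simp
  have hae : a ≠ e := fun h => hes (h ▸ ha)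
  have hbe : b ≠ e := fun h => hes (h ▸ hb)
  have hce : c ≠ e := fun h => hes (h ▸ hc)
  refine hfam.2.2.2.2.1 a (hssub ha) b (hssub hb) c (hssub hc) e (htsub het)
    hab hac hae hbc hbe hce ⟨x₀, y₁, ?_, ?_, ?_⟩
  · rw [hall a ha, hall b hb]
  · rw [hall a ha, hall c hc]
  · rw [hall a ha, hall' e het]


/-- There is an absolute constant `C` such that for every family `Λ` of `n`
pseudoplanes in general position in ℝ³, the complexity of the lower envelope of `Λ` is at
most `C·n`; in particular, the number of unordered triples `{a,b,c} ⊆ Λ` whose intersection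
point `p_{a,b,c}` lies on the lower envelope is at most `C·n`. -/
theorem statement11 :
    ∃ C : ℝ, 0 < C ∧
      ∀ (Λ : Finset PP) (n : ℕ), Λ.card = n → PseudoplaneFamily Λ →
        (((Λ.powersetCard 3).filter fun s =>
            ∃ x y z : ℝ, (∀ a ∈ s, a x y = z) ∧ ∀ d ∈ Λ, z ≤ d x y).card : ℝ)
          ≤ C * (n : ℝ) := by
  refine ⟨2, by norm_num, ?_⟩
  intro Λ n hn hfam
  set S := (Λ.powersetCard 3).filter fun s =>
    ∃ x y z : ℝ, (∀ a ∈ s, a x y = z) ∧ ∀ d ∈ Λ, z ≤ d x y with hS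
  have key : ∀ s ∈ S, ∃ m σ, Good Λ m σ s := by
    intro s hs
    rw [hS, Finset.mem_filter, Finset.mem_powersetCard] at hs
    exact main₁ hfam hs.1.1 hs.1.2 hs.2
  set F : Finset PP → PP × Bool := fun s =>
    if h : ∃ m σ, Good Λ m σ s then (h.choose, h.choose_spec.choose)
    else ((fun _ _ => 0), true) with hF
  have hFg : ∀ s ∈ S, Good Λ (F s).1 (F s).2 s := by
    intro s hs
    have h := key s hs
    simp only [hF, dif_pos h]
    exact h.choose_spec.choose_spec
  have hcb : S.card ≤ (Λ ×ˢ (Finset.univ : Finset Bool)).card := by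
    apply Finset.card_le_card_of_injOn F
    · intro s hs
      have hg := hFg s hs
      exact Finset.mem_product.mpr ⟨hg.1 hg.2.2.1, Finset.mem_univ _⟩
    · intro s hs t ht heq
      exact main₂ hfam (hFg s hs) (heq ▸ hFg t ht)
  have hcard : (Λ ×ˢ (Finset.univ : Finset Bool)).card = n * 2 := by
    rw [Finset.card_product, hn]
    simp
  have hfin : S.card ≤ 2 * n := by omega
  calc (S.card : ℝ) ≤ ((2 * n : ℕ) : ℝ) := by exact_mod_cast hfin
    _ = 2 * (n : ℝ) := by push_cast; ring
end
end

section
/- (Antipodality for planes.) Let Λ be a set of n nonvertical planes in ℝ³ in general position, let k be a nonnegative integer, let a, b ∈ Λ be distinct with intersection line l_{a,b} = a ∩ b, and let p be a point of l_{a,b} that does not lie on any plane of D = Λ \ {a,b}. Set D^k = {d ∈ D : C_{a,b,d} ∈ C^k}, h_up = {d ∈ D : d(p_x, p_y) > p_z} and h_down = {d ∈ D : d(p_x, p_y) < p_z} (the planes crossing the vertical line through p above, respectively below, p). Then | |h_up ∩ D^k| − |h_down ∩ D^k| | ≤ 2. -/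
open scoped Classical

noncomputable section

/-- `a` is an affine function, i.e. its graph is a nonvertical plane. -/
def IsAffinePlane (a : PP) : Prop :=
  ∃ α β δ : ℝ, ∀ x y : ℝ, a x y = α * x + β * y + δ

/-- A set of nonvertical planes in general position:
the linear parts of any two are distinct (the difference is nonconstant, so any two planes
meet in a line), any three planes meet in exactly one point, and no four planes have a
common point. -/
def PlaneFamily (Λ : Finset PP) : Prop :=
  (∀ a ∈ Λ, IsAffinePlane a) ∧
  (∀ a ∈ Λ, ∀ b ∈ Λ, a ≠ b → ∃ x y x' y' : ℝ, a x y - b x y ≠ a x' y' - b x' y') ∧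
  (∀ a ∈ Λ, ∀ b ∈ Λ, ∀ c ∈ Λ, a ≠ b → a ≠ c → b ≠ c →
    ∃! q : ℝ × ℝ, a q.1 q.2 = b q.1 q.2 ∧ a q.1 q.2 = c q.1 q.2) ∧
  (∀ a ∈ Λ, ∀ b ∈ Λ, ∀ c ∈ Λ, ∀ d ∈ Λ, a ≠ b → a ≠ c → a ≠ d → b ≠ c → b ≠ d → c ≠ d →
    ¬ ∃ x y : ℝ, a x y = b x y ∧ a x y = c x y ∧ a x y = d x y)

/-!
Parametrize the line `l_{a,b}` as `s ↦ p + s • (u, v)`. Along it every `d ∈ D` differs from `a`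
by an affine function `m_d * (s - t_d)` of nonzero slope, whose root `t_d` is the parameter of
the vertex `p_{a,b,d}`; general position makes the roots distinct and nonzero. Writing `λ(s)`
for the number of these lines lying strictly below zero at `s`, the level of `p_{a,b,d}` is
`λ(t_d)`, and `d` passes above `p` iff its line is positive at `s = 0`. So the statement is one
about an arrangement of lines in the plane. Sweeping from `0` to `+∞`, a descending line whose
root is at level `k` raises the level from `k` to `k + 1` and an ascending one lowers it back,
so their numbers differ by `[k < λ(+∞)] - [k < λ(0)]`; by the reflection `s ↦ -s` the same
holds towards `-∞`. Hence the number of lines above `0` at level `k` minus the number below is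
`[k < λ(+∞)] + [k < λ(-∞)] - 2 [k < λ(0)] ∈ [-2, 2]`.
-/

open Finset

lemma card_filter_insert_of_notMem {α : Type*} {s : Finset α} {a : α} (ha : a ∉ s)
    (p : α → Prop) [DecidablePred p] :
    #{x ∈ insert a s | p x} = #{x ∈ s | p x} + if p a then 1 else 0 := by
  rw [card_filter, card_filter, sum_insert ha, add_comm]

section LineArrangement

variable {ι : Type*} (m t : ι → ℝ)

/-- Line `j` is the graph of `s ↦ m j * (s - t j)`; the level of `(s, 0)` counts the lines
passing strictly below it. -/
def lineLevel (I : Finset ι) (s : ℝ) : ℕ :=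
  #{j ∈ I | m j * (s - t j) < 0}

variable {m t}

lemma lineLevel_insert {I : Finset ι} {i : ι} (hi : i ∉ I) (s : ℝ) :
    lineLevel m t (insert i I) s = lineLevel m t I s + if m i * (s - t i) < 0 then 1 else 0 :=
  card_filter_insert_of_notMem hi _

lemma lineLevel_neg (I : Finset ι) (s : ℝ) : lineLevel (-m) (-t) I (-s) = lineLevel m t I s := by
  unfold lineLevel
  congr! 3 with j
  simp only [Pi.neg_apply]
  ring_nf

lemma lineLevel_of_forall_lt {I : Finset ι} {s : ℝ} (h : ∀ i ∈ I, t i < s) :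
    lineLevel m t I s = #{i ∈ I | m i < 0} := by
  unfold lineLevel
  congr! 2 with j hj
  have hpos := sub_pos.2 (h j hj)
  exact ⟨fun hlt => by nlinarith, fun hneg => mul_neg_of_neg_of_pos hneg hpos⟩

lemma lineLevel_insert_of_lt {I : Finset ι} {i : ι} (hi : i ∉ I) {s : ℝ} (hs : s < t i) :
    lineLevel m t (insert i I) s = lineLevel m t I s + if 0 < m i then 1 else 0 := by
  rw [lineLevel_insert hi]
  have hneg := sub_neg.2 hs
  congr 2
  exact propext ⟨fun h => by nlinarith, fun h => mul_neg_of_pos_of_neg h hneg⟩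

theorem card_descending_sub_card_ascending (I : Finset ι) (s₀ : ℝ) (hs₀ : ∀ i ∈ I, t i ≠ s₀)
    (hinj : Set.InjOn t I) (k : ℕ) :
    (#{i ∈ I | lineLevel m t I (t i) = k ∧ s₀ < t i ∧ m i < 0} : ℤ)
      - #{i ∈ I | lineLevel m t I (t i) = k ∧ s₀ < t i ∧ 0 < m i}
      = (if k < #{i ∈ I | m i < 0} then 1 else 0) - if k < lineLevel m t I s₀ then 1 else 0 := by
  induction I using Finset.induction_on_max_value t generalizing k with
  | empty => simp [lineLevel]
  | insert a I haI hmax ih =>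
    have hlt : ∀ x ∈ I, t x < t a := fun x hx =>
      (hmax x hx).lt_of_ne fun h => haI (hinj (mem_insert_of_mem hx) (mem_insert_self a I) h ▸ hx)
    rcases (hs₀ a (mem_insert_self a I)).lt_or_gt with hleft | hright
    · have hall : ∀ x ∈ insert a I, t x < s₀ :=
        forall_mem_insert _ _ _ |>.2 ⟨hleft, fun x hx => (hlt x hx).trans hleft⟩
      rw [lineLevel_of_forall_lt hall, filter_false_of_mem, filter_false_of_mem, sub_self]
      · simp
      all_goals exact fun x hx h => (hall x hx).not_gt h.2.1
    set F := #{i ∈ I | m i < 0}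
    set δ := if 0 < m a then 1 else 0
    have hcount : ∀ (P : ι → Prop) [DecidablePred P] (j : ℕ),
        #{i ∈ insert a I | lineLevel m t (insert a I) (t i) = j ∧ P i}
          = #{i ∈ I | lineLevel m t I (t i) + δ = j ∧ P i} + if F = j ∧ P a then 1 else 0 := by
      intro P _ j
      rw [card_filter_insert_of_notMem haI, lineLevel_insert haI, sub_self, mul_zero,
        if_neg (lt_irrefl 0), add_zero, lineLevel_of_forall_lt hlt]
      congr 2
      exact filter_congr fun x hx => by rw [lineLevel_insert_of_lt haI (hlt x hx)]
    have hneg : #{i ∈ insert a I | m i < 0} = F + if m a < 0 then 1 else 0 :=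
      card_filter_insert_of_notMem haI _
    specialize ih (fun i hi => hs₀ i (mem_insert_of_mem hi)) (hinj.mono (by simp))
    rw [hcount, hcount, hneg, lineLevel_insert_of_lt haI hright]
    rcases lt_trichotomy (m a) 0 with ha | ha | ha
    · simp only [δ, if_neg ha.not_gt, add_zero, ha, hright, and_true, ha.not_gt, and_false]
      have := ih k
      split_ifs at * <;> omega
    · simp only [δ, ha, lt_irrefl, if_false, add_zero, and_false]
      exact ih k
    · simp only [δ, if_pos ha, ha, ha.not_gt, hright, and_true, and_false, if_false, add_zero]
      cases k with
      | zero =>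
        simp only [Nat.add_eq_zero_iff, one_ne_zero, and_false, false_and, filter_false,
          card_empty, Nat.cast_zero]
        split_ifs <;> omega
      | succ n =>
        simp only [Nat.add_right_cancel_iff]
        have := ih n
        split_ifs at * <;> omega

theorem abs_card_above_sub_card_below_le_two (I : Finset ι) (s₀ : ℝ)
    (hs₀ : ∀ i ∈ I, t i ≠ s₀) (hinj : Set.InjOn t I) (k : ℕ) :
    |(#{i ∈ I | 0 < m i * (s₀ - t i) ∧ lineLevel m t I (t i) = k} : ℤ)
      - #{i ∈ I | m i * (s₀ - t i) < 0 ∧ lineLevel m t I (t i) = k}| ≤ 2 := by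
  have habove : #{i ∈ I | 0 < m i * (s₀ - t i) ∧ lineLevel m t I (t i) = k}
      = #{i ∈ I | lineLevel m t I (t i) = k ∧ s₀ < t i ∧ m i < 0}
        + #{i ∈ I | lineLevel m t I (t i) = k ∧ t i < s₀ ∧ 0 < m i} := by
    rw [← card_union_of_disjoint (disjoint_filter.2 fun i _ h h' => by linarith [h.2.1, h'.2.1]),
      ← filter_or]
    congr 1
    exact filter_congr fun i _ => by simp only [mul_pos_iff, sub_pos, sub_neg]; tauto
  have hbelow : #{i ∈ I | m i * (s₀ - t i) < 0 ∧ lineLevel m t I (t i) = k}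
      = #{i ∈ I | lineLevel m t I (t i) = k ∧ s₀ < t i ∧ 0 < m i}
        + #{i ∈ I | lineLevel m t I (t i) = k ∧ t i < s₀ ∧ m i < 0} := by
    rw [← card_union_of_disjoint (disjoint_filter.2 fun i _ h h' => by linarith [h.2.1, h'.2.1]),
      ← filter_or]
    congr 1
    exact filter_congr fun i _ => by simp only [mul_neg_iff, sub_pos, sub_neg]; tauto
  have hright := card_descending_sub_card_ascending (m := m) I s₀ hs₀ hinj k
  have hleft := card_descending_sub_card_ascending (m := -m) (t := -t) I (-s₀)
    (fun i hi => neg_injective.ne (hs₀ i hi)) (neg_injective.comp_injOn hinj) k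
  simp only [Pi.neg_apply, lineLevel_neg, neg_lt_neg_iff, neg_pos, Left.neg_neg_iff] at hleft
  rw [habove, hbelow, abs_le]
  push_cast
  split_ifs at hright hleft <;> constructor <;> omega

end LineArrangement

lemma IsAffinePlane.apply_line {d : PP} (hd : IsAffinePlane d) (x₀ y₀ u v s : ℝ) :
    d (x₀ + s * u) (y₀ + s * v) = d x₀ y₀ + s * (d (x₀ + u) (y₀ + v) - d x₀ y₀) := by
  obtain ⟨α, β, γ, hd⟩ := hd
  simp only [hd]
  ring

lemma IsAffinePlane.exists_line_param_of_eq {a b : PP} (ha : IsAffinePlane a)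
    (hb : IsAffinePlane b) (hab : ∃ x y x' y', a x y - b x y ≠ a x' y' - b x' y')
    {x₀ y₀ : ℝ} (h₀ : a x₀ y₀ = b x₀ y₀) :
    ∃ u v : ℝ, (∀ s, a (x₀ + s * u) (y₀ + s * v) = b (x₀ + s * u) (y₀ + s * v)) ∧
      ∀ x y, a x y = b x y → ∃ s, x₀ + s * u = x ∧ y₀ + s * v = y := by
  obtain ⟨α, β, γ, ha⟩ := ha
  obtain ⟨α', β', γ', hb⟩ := hb
  simp only [ha, hb] at h₀ hab ⊢
  have hnormal : (α - α') ^ 2 + (β - β') ^ 2 ≠ 0 := by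
    obtain ⟨x, y, x', y', hne⟩ := hab
    intro hzero
    have hα : α - α' = 0 := by nlinarith [sq_nonneg (α - α'), sq_nonneg (β - β')]
    have hβ : β - β' = 0 := by nlinarith [sq_nonneg (α - α'), sq_nonneg (β - β')]
    exact hne (by linear_combination (x - x') * hα + (y - y') * hβ)
  refine ⟨-(β - β'), α - α', fun s => by linear_combination h₀, fun x y hxy => ?_⟩
  have hperp : (α - α') * (x - x₀) + (β - β') * (y - y₀) = 0 := by
    linear_combination hxy - h₀
  refine ⟨((α - α') * (y - y₀) - (β - β') * (x - x₀)) / ((α - α') ^ 2 + (β - β') ^ 2), ?_, ?_⟩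
  · field_simp
    linear_combination (-(α - α')) * hperp
  · field_simp
    linear_combination (-(β - β')) * hperp

section AlongLine

variable {Λ : Finset PP} {a b d : PP} {X Y : ℝ → ℝ} {m t : PP → ℝ}

lemma level_eq_lineLevel (hline : ∀ s, a (X s) (Y s) = b (X s) (Y s))
    (hheight : ∀ c ∈ Λ \ {a, b}, ∀ s, c (X s) (Y s) - a (X s) (Y s) = m c * (s - t c)) (s : ℝ) :
    level Λ (X s) (Y s) (a (X s) (Y s)) = lineLevel m t (Λ \ {a, b}) s := by
  unfold level lineLevel
  congr 1
  ext c
  simp only [mem_filter, mem_sdiff, mem_insert, mem_singleton, not_or]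
  constructor
  · rintro ⟨hc, hlt⟩
    have hca : c ≠ a := by rintro rfl; exact lt_irrefl _ hlt
    have hcb : c ≠ b := by rintro rfl; rw [hline s] at hlt; exact lt_irrefl _ hlt
    have hcD : c ∈ Λ \ {a, b} := by simp [hc, hca, hcb]
    exact ⟨⟨hc, hca, hcb⟩, by linarith [hheight c hcD s]⟩
  · rintro ⟨⟨hc, hca, hcb⟩, hlt⟩
    have hcD : c ∈ Λ \ {a, b} := by simp [hc, hca, hcb]
    exact ⟨hc, by linarith [hheight c hcD s]⟩

lemma isKCorridorTriple_iff_lineLevel (hline : ∀ s, a (X s) (Y s) = b (X s) (Y s))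
    (honto : ∀ x y, a x y = b x y → ∃ s, X s = x ∧ Y s = y)
    (hheight : ∀ c ∈ Λ \ {a, b}, ∀ s, c (X s) (Y s) - a (X s) (Y s) = m c * (s - t c))
    (hd : d ∈ Λ \ {a, b}) (hmd : m d ≠ 0) (k : ℕ) :
    IsKCorridorTriple Λ k {a, b, d} ↔ lineLevel m t (Λ \ {a, b}) (t d) = k := by
  rw [← level_eq_lineLevel hline hheight]
  constructor
  · rintro ⟨x, y, z, hall, hlevel⟩
    have hax : a x y = z := hall a (by simp)
    have hdx : d x y = z := hall d (by simp)
    obtain ⟨s, rfl, rfl⟩ := honto _ _ (hax.trans (hall b (by simp)).symm)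
    have hs : m d * (s - t d) = 0 := by rw [← hheight d hd s, hax, hdx, sub_self]
    rwa [← sub_eq_zero.1 ((mul_eq_zero.1 hs).resolve_left hmd), hax]
  · intro hlevel
    refine ⟨X (t d), Y (t d), a (X (t d)) (Y (t d)), fun c hc => ?_, hlevel⟩
    simp only [mem_insert, mem_singleton] at hc
    rcases hc with rfl | rfl | rfl
    · rfl
    · exact (hline _).symm
    · linarith [hheight c hd (t c)]

lemma injOn_root (hΛ : PlaneFamily Λ) (ha : a ∈ Λ) (hb : b ∈ Λ) (hab : a ≠ b)
    (hline : ∀ s, a (X s) (Y s) = b (X s) (Y s))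
    (hheight : ∀ c ∈ Λ \ {a, b}, ∀ s, c (X s) (Y s) - a (X s) (Y s) = m c * (s - t c)) :
    Set.InjOn t (Λ \ {a, b} : Finset PP) := by
  intro d hd e he hde
  rw [mem_coe] at hd he
  by_contra hne
  simp only [mem_sdiff, mem_insert, mem_singleton, not_or] at hd he
  refine hΛ.2.2.2 a ha b hb d hd.1 e he.1 hab (Ne.symm hd.2.1) (Ne.symm he.2.1)
    (Ne.symm hd.2.2) (Ne.symm he.2.2) hne ⟨X (t d), Y (t d), hline _, ?_, ?_⟩
  · linarith [hheight d (by simp [hd]) (t d)]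
  · linarith [hheight e (by simp [he]) (t d), hde ▸ hheight e (by simp [he]) (t e)]

end AlongLine

lemma exists_nonzero_slope_and_root {Λ : Finset PP} {a b : PP} (hΛ : PlaneFamily Λ) (ha : a ∈ Λ)
    (hb : b ∈ Λ) (hab : a ≠ b) {x₀ y₀ u v : ℝ}
    (honto : ∀ x y, a x y = b x y → ∃ s, x₀ + s * u = x ∧ y₀ + s * v = y)
    (hgen : ∀ d ∈ Λ \ {a, b}, d x₀ y₀ ≠ a x₀ y₀) :
    ∃ m t : PP → ℝ, ∀ d ∈ Λ \ {a, b}, m d ≠ 0 ∧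
      ∀ s, d (x₀ + s * u) (y₀ + s * v) - a (x₀ + s * u) (y₀ + s * v) = m d * (s - t d) := by
  set height : PP → ℝ → ℝ := fun d s => d (x₀ + s * u) (y₀ + s * v) - a (x₀ + s * u) (y₀ + s * v)
  refine ⟨fun d => height d 1 - height d 0, fun d => -height d 0 / (height d 1 - height d 0),
    fun d hd => ?_⟩
  simp only [mem_sdiff, mem_insert, mem_singleton, not_or] at hd
  have haffine : ∀ s, height d s = height d 0 + s * (height d 1 - height d 0) := fun s => by
    simp only [height, (hΛ.1 d hd.1).apply_line, (hΛ.1 a ha).apply_line]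
    ring
  have h0 : height d 0 ≠ 0 := by
    simpa [height, sub_eq_zero] using hgen d (by simp [hd])
  have hslope : height d 1 - height d 0 ≠ 0 := by
    intro hzero
    obtain ⟨q, ⟨hab', had⟩, -⟩ :=
      hΛ.2.2.1 a ha b hb d hd.1 hab (Ne.symm hd.2.1) (Ne.symm hd.2.2)
    obtain ⟨s, hx, hy⟩ := honto q.1 q.2 hab'
    have hs : height d s = 0 := by simp only [height, hx, hy, had, sub_self]
    rw [haffine s, hzero, mul_zero, add_zero] at hs
    exact h0 hs
  refine ⟨hslope, fun s => ?_⟩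
  change height d s = _
  rw [haffine s]
  field_simp
  ring

/-- Antipodality for planes: Let `Λ` be a set of `n` nonvertical planes in ℝ³
in general position, `k` a nonnegative integer, `a ≠ b` in `Λ` with intersection line
`l_{a,b}`, and `p = (px,py,pz)` a point of `l_{a,b}` not lying on any plane of
`D = Λ \ {a,b}`. With `D^k = {d ∈ D : C_{a,b,d} ∈ C^k}`, `h_up` (resp. `h_down`) the planes
crossing the vertical line through `p` above (resp. below) `p`, we have
`| |h_up ∩ D^k| − |h_down ∩ D^k| | ≤ 2`. -/
theorem statement12 (Λ : Finset PP) (k : ℕ) (hΛ : PlaneFamily Λ)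
    (a b : PP) (ha : a ∈ Λ) (hb : b ∈ Λ) (hab : a ≠ b)
    (px py pz : ℝ) (hpa : a px py = pz) (hpb : b px py = pz)
    (hgen : ∀ d ∈ Λ \ {a, b}, d px py ≠ pz) :
    |((((Λ \ {a, b}).filter fun d =>
          pz < d px py ∧ IsKCorridorTriple Λ k {a, b, d}).card : ℤ) -
      (((Λ \ {a, b}).filter fun d =>
          d px py < pz ∧ IsKCorridorTriple Λ k {a, b, d}).card : ℤ))| ≤ 2 := by
  obtain ⟨u, v, hline, honto⟩ := (hΛ.1 a ha).exists_line_param_of_eq (hΛ.1 b hb)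
    (hΛ.2.1 a ha b hb hab) (hpa.trans hpb.symm)
  obtain ⟨m, t, hslope⟩ :=
    exists_nonzero_slope_and_root hΛ ha hb hab honto fun d hd => hpa ▸ hgen d hd
  have hheight := fun d hd => (hslope d hd).2
  have hat_p : ∀ d ∈ Λ \ {a, b}, d px py - pz = m d * (0 - t d) := fun d hd => by
    simpa [hpa] using hheight d hd 0
  have hcorridor := fun d hd => isKCorridorTriple_iff_lineLevel (X := fun s => px + s * u)
    (Y := fun s => py + s * v) hline honto hheight hd (hslope d hd).1 k
  have hup : ((Λ \ {a, b}).filter fun d => pz < d px py ∧ IsKCorridorTriple Λ k {a, b, d})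
      = {d ∈ Λ \ {a, b} | 0 < m d * (0 - t d) ∧ lineLevel m t (Λ \ {a, b}) (t d) = k} :=
    filter_congr fun d hd => and_congr (by rw [← sub_pos, hat_p d hd]) (hcorridor d hd)
  have hdown : ((Λ \ {a, b}).filter fun d => d px py < pz ∧ IsKCorridorTriple Λ k {a, b, d})
      = {d ∈ Λ \ {a, b} | m d * (0 - t d) < 0 ∧ lineLevel m t (Λ \ {a, b}) (t d) = k} :=
    filter_congr fun d hd => and_congr (by rw [← sub_neg, hat_p d hd]) (hcorridor d hd)
  rw [hup, hdown]
  refine abs_card_above_sub_card_below_le_two _ 0 (fun d hd ht => hgen d hd ?_)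
    (injOn_root hΛ ha hb hab hline hheight) k
  rw [← sub_eq_zero, hat_p d hd, ht, sub_self, mul_zero]
end
end

section
/- Let Λ be a set of nonvertical planes in ℝ³ in general position and let C₁, C₂ be corridors determined by triples of planes of Λ. If C₁ is immersed in C₂, then C₂ is not immersed in C₁. -/
open scoped Classical

noncomputable section

/-! Write `C₁ = {a, b, f}` and `C₂ = {d, e, f}` and suppose each is immersed in the other. If the
lines `a = b` and `d = e` have crossing projections, then above the crossing point the height `z₁`
of the first line lies strictly between the height `z₂` of the second and the height `w` of `f`,
while `z₂` lies strictly between `z₁` and `w`, which is absurd. If the projections are parallel,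
with direction `v`, the same contradiction arises for the slopes along `v`: an affine function that
stays below the maximum of finitely many affine functions on a whole line has its slope between
theirs, and general position makes the relevant slopes distinct. -/

/-- A point `(x, y, z)` lies in `corridorSet s` exactly when `Straddles s (fun g => g x y) z`. -/
def Straddles {α : Type*} (s : Finset α) (φ : α → ℝ) (z : ℝ) : Prop :=
  (∃ g ∈ s, φ g < z) ∧ ∃ g ∈ s, z < φ g

theorem not_straddles_and_straddles {α : Type*} {s₁ s₂ : Finset α} (φ : α → ℝ) {z₁ z₂ : ℝ}
    (hinter : (s₁ ∩ s₂).card ≤ 1) (h₁ : ∀ g ∈ s₁ \ s₂, φ g = z₁)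
    (h₂ : ∀ g ∈ s₂ \ s₁, φ g = z₂) : ¬ (Straddles s₂ φ z₁ ∧ Straddles s₁ φ z₂) := by
  obtain ⟨w, hw⟩ : ∃ w, ∀ g ∈ s₁ ∩ s₂, φ g = w := by
    rcases (s₁ ∩ s₂).eq_empty_or_nonempty with hempty | ⟨f, hf⟩
    · exact ⟨0, by simp [hempty]⟩
    · exact ⟨φ f, fun g hg => by rw [Finset.card_le_one.mp hinter g hg f hf]⟩
  have hvals : ∀ {s t : Finset α} {z : ℝ}, (∀ g ∈ s \ t, φ g = z) → (∀ g ∈ s ∩ t, φ g = w) →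
      ∀ g ∈ s, φ g = z ∨ φ g = w := by
    intro s t z hz hst g hg
    by_cases hgt : g ∈ t
    · exact Or.inr (hst g (Finset.mem_inter.mpr ⟨hg, hgt⟩))
    · exact Or.inl (hz g (Finset.mem_sdiff.mpr ⟨hg, hgt⟩))
  have hv₁ := hvals h₁ hw
  have hv₂ := hvals h₂ (Finset.inter_comm s₁ s₂ ▸ hw)
  rintro ⟨⟨⟨g₁, hg₁, lt₁⟩, ⟨g₂, hg₂, lt₂⟩⟩, ⟨⟨g₃, hg₃, lt₃⟩, ⟨g₄, hg₄, lt₄⟩⟩⟩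
  rcases hv₂ g₁ hg₁ with e₁ | e₁ <;> rcases hv₂ g₂ hg₂ with e₂ | e₂ <;>
    rcases hv₁ g₃ hg₃ with e₃ | e₃ <;> rcases hv₁ g₄ hg₄ with e₄ | e₄ <;> linarith

theorem forall_mem_pair_eq {α β : Type*} {s : Finset α} {a b : α} (hs : s = {a, b}) (φ : α → β)
    (hφ : φ a = φ b) : ∀ g ∈ s, φ g = φ a := by
  simp [hs, hφ]

theorem card_sdiff_eq_two {α : Type*} [DecidableEq α] {s t : Finset α} (hs : s.card = 3)
    (hst : (s ∩ t).card = 1) : (s \ t).card = 2 := by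
  have := Finset.card_sdiff_add_card_inter s t
  omega

theorem exists_nonneg_of_forall_exists_pos {ι : Type*} (S : Finset ι) (c m : ι → ℝ)
    (h : ∀ t : ℝ, ∃ i ∈ S, 0 < c i + t * m i) : ∃ i ∈ S, 0 ≤ m i := by
  by_contra! hneg
  have hbot : ∀ i ∈ S, Filter.Tendsto (fun t : ℝ => c i + t * m i) Filter.atTop Filter.atBot :=
    fun i hi => Filter.tendsto_atBot_add_const_left _ _
      (Filter.tendsto_id.atTop_mul_const_of_neg (hneg i hi))
  obtain ⟨t, ht⟩ := ((Filter.eventually_all_finset S).2 fun i hi =>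
    (hbot i hi).eventually (Filter.eventually_le_atBot 0)).exists
  obtain ⟨i, hi, hpos⟩ := h t
  exact (ht i hi).not_gt hpos

theorem exists_nonpos_of_forall_exists_pos {ι : Type*} (S : Finset ι) (c m : ι → ℝ)
    (h : ∀ t : ℝ, ∃ i ∈ S, 0 < c i + t * m i) : ∃ i ∈ S, m i ≤ 0 := by
  obtain ⟨i, hi, hm⟩ := exists_nonneg_of_forall_exists_pos S c (-m) fun t => by
    obtain ⟨i, hi, hpos⟩ := h (-t)
    exact ⟨i, hi, by simpa using hpos⟩
  exact ⟨i, hi, by simpa using hm⟩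

def dirSlope (a : PP) (v : ℝ × ℝ) : ℝ := a v.1 v.2 - a 0 0

namespace IsAffinePlane

variable {a b : PP}

theorem apply_add_smul (ha : IsAffinePlane a) (q v : ℝ × ℝ) (t : ℝ) :
    a (q + t • v).1 (q + t • v).2 = a q.1 q.2 + t * dirSlope a v := by
  obtain ⟨α, β, δ, ha⟩ := ha
  simp only [dirSlope, Prod.fst_add, Prod.snd_add, Prod.smul_fst, Prod.smul_snd, smul_eq_mul, ha]
  ring

theorem apply_eq_on_line (ha : IsAffinePlane a) (hb : IsAffinePlane b) {q v : ℝ × ℝ}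
    (hq : a q.1 q.2 = b q.1 q.2) (hv : dirSlope a v = dirSlope b v) (t : ℝ) :
    a (q + t • v).1 (q + t • v).2 = b (q + t • v).1 (q + t • v).2 := by
  rw [ha.apply_add_smul, hb.apply_add_smul, hq, hv]

theorem exists_apply_eq_on_line (ha : IsAffinePlane a) (hb : IsAffinePlane b) (q : ℝ × ℝ)
    {v : ℝ × ℝ} (hv : dirSlope a v ≠ dirSlope b v) :
    ∃ t : ℝ, a (q + t • v).1 (q + t • v).2 = b (q + t • v).1 (q + t • v).2 := by
  refine ⟨(b q.1 q.2 - a q.1 q.2) / (dirSlope a v - dirSlope b v), ?_⟩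
  rw [ha.apply_add_smul, hb.apply_add_smul]
  field_simp [sub_ne_zero.mpr hv]
  ring

theorem exists_coeffs_sub (ha : IsAffinePlane a) (hb : IsAffinePlane b)
    (hab : ∃ x y x' y' : ℝ, a x y - b x y ≠ a x' y' - b x' y') :
    ∃ α β γ : ℝ, (α ≠ 0 ∨ β ≠ 0) ∧ ∀ x y, a x y - b x y = α * x + β * y + γ := by
  obtain ⟨α, β, δ, ha⟩ := ha
  obtain ⟨α', β', δ', hb⟩ := hb
  refine ⟨α - α', β - β', δ - δ', ?_, fun x y => by rw [ha, hb]; ring⟩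
  by_contra! h
  obtain ⟨x, y, x', y', hne⟩ := hab
  apply hne
  simp only [ha, hb]
  linear_combination (x - x') * h.1 + (y - y') * h.2

theorem exists_apply_eq (ha : IsAffinePlane a) (hb : IsAffinePlane b)
    (hab : ∃ x y x' y' : ℝ, a x y - b x y ≠ a x' y' - b x' y') :
    ∃ q : ℝ × ℝ, a q.1 q.2 = b q.1 q.2 := by
  obtain ⟨α, β, γ, hαβ, hsub⟩ := exists_coeffs_sub ha hb hab
  rcases hαβ with hα | hβ
  · refine ⟨(-γ / α, 0), sub_eq_zero.mp ?_⟩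
    rw [hsub]
    field_simp
    ring
  · refine ⟨(0, -γ / β), sub_eq_zero.mp ?_⟩
    rw [hsub]
    field_simp
    ring

theorem exists_dirSlope_eq (ha : IsAffinePlane a) (hb : IsAffinePlane b)
    (hab : ∃ x y x' y' : ℝ, a x y - b x y ≠ a x' y' - b x' y') :
    ∃ v : ℝ × ℝ, v ≠ 0 ∧ dirSlope a v = dirSlope b v := by
  obtain ⟨α, β, γ, hαβ, hsub⟩ := exists_coeffs_sub ha hb hab
  refine ⟨(β, -α), fun h => ?_, sub_eq_zero.mp ?_⟩
  · simp only [Prod.ext_iff, Prod.fst_zero, Prod.snd_zero, neg_eq_zero] at h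
    tauto
  · have h₀ := hsub 0 0
    have hv := hsub β (-α)
    simp only [dirSlope]
    linear_combination hv - h₀

end IsAffinePlane

theorem straddles_dirSlope_of_forall_lt {s : Finset PP} (hs : ∀ g ∈ s, IsAffinePlane g) {a : PP}
    (ha : IsAffinePlane a) {q v : ℝ × ℝ}
    (hline : ∀ t : ℝ, ∃ g ∈ s, a (q + t • v).1 (q + t • v).2 < g (q + t • v).1 (q + t • v).2)
    (hne : ∀ g ∈ s, dirSlope g v ≠ dirSlope a v) :
    Straddles s (dirSlope · v) (dirSlope a v) := by
  have hpos : ∀ t : ℝ, ∃ g ∈ s,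
      0 < (g q.1 q.2 - a q.1 q.2) + t * (dirSlope g v - dirSlope a v) := fun t => by
    obtain ⟨g, hg, hlt⟩ := hline t
    rw [ha.apply_add_smul, (hs g hg).apply_add_smul] at hlt
    exact ⟨g, hg, by linarith⟩
  obtain ⟨g, hg, hle⟩ := exists_nonpos_of_forall_exists_pos s _ _ hpos
  obtain ⟨g', hg', hle'⟩ := exists_nonneg_of_forall_exists_pos s _ _ hpos
  exact ⟨⟨g, hg, lt_of_le_of_ne (by linarith) (hne g hg)⟩,
    ⟨g', hg', lt_of_le_of_ne (by linarith) (hne g' hg').symm⟩⟩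

/-- Translating the common point of three planes of a general family along `v` would give a
second one. -/
theorem PlaneFamily.dirSlope_ne {Λ : Finset PP} (hΛ : PlaneFamily Λ) {a b g : PP}
    (ha : a ∈ Λ) (hb : b ∈ Λ) (hg : g ∈ Λ) (hab : a ≠ b) (hga : g ≠ a) (hgb : g ≠ b)
    {v : ℝ × ℝ} (hv : v ≠ 0) (hσ : dirSlope a v = dirSlope b v) :
    dirSlope g v ≠ dirSlope a v := by
  intro hσ'
  obtain ⟨r, ⟨hr₁, hr₂⟩, huniq⟩ := hΛ.2.2.1 a ha b hb g hg hab hga.symm hgb.symm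
  have hshift := huniq (r + (1 : ℝ) • v) ⟨by
    rw [(hΛ.1 a ha).apply_add_smul, (hΛ.1 b hb).apply_add_smul, hr₁, hσ], by
    rw [(hΛ.1 a ha).apply_add_smul, (hΛ.1 g hg).apply_add_smul, hr₂, hσ']⟩
  rw [one_smul, add_eq_left] at hshift
  exact hv hshift

namespace Immersed

variable {s₁ s₂ : Finset PP} {a b : PP}

theorem straddles_apply (h : Immersed s₁ s₂) (hab₁ : s₁ \ s₂ = {a, b}) {x y : ℝ}
    (hxy : a x y = b x y) : Straddles s₂ (fun g => g x y) (a x y) :=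
  h.2 (show (x, y, a x y) ∈ curveSet (s₁ \ s₂) by simp [curveSet, hab₁, hxy])

theorem straddles_dirSlope {Λ : Finset PP} (hΛ : PlaneFamily Λ) (hs₁ : s₁ ⊆ Λ) (hs₂ : s₂ ⊆ Λ)
    (h : Immersed s₁ s₂) (hab₁ : s₁ \ s₂ = {a, b}) (hab : a ≠ b) {q v : ℝ × ℝ} (hv : v ≠ 0)
    (hσ : dirSlope a v = dirSlope b v) (hq : a q.1 q.2 = b q.1 q.2) :
    Straddles s₂ (dirSlope · v) (dirSlope a v) := by
  have ha : a ∈ s₁ ∧ a ∉ s₂ := Finset.mem_sdiff.mp (by simp [hab₁])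
  have hb : b ∈ s₁ ∧ b ∉ s₂ := Finset.mem_sdiff.mp (by simp [hab₁])
  have hA := hΛ.1 a (hs₁ ha.1)
  refine straddles_dirSlope_of_forall_lt (fun g hg => hΛ.1 g (hs₂ hg)) hA
    (fun t => (h.straddles_apply hab₁ (hA.apply_eq_on_line (hΛ.1 b (hs₁ hb.1)) hq hσ t)).2)
    fun g hg => hΛ.dirSlope_ne (hs₁ ha.1) (hs₁ hb.1) (hs₂ hg) hab
      (fun hga => ha.2 (hga ▸ hg)) (fun hgb => hb.2 (hgb ▸ hg)) hv hσ

end Immersed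

/-- Let `Λ` be a set of nonvertical planes in ℝ³ in general position and let
`C₁, C₂` be corridors determined by triples of planes of `Λ`. If `C₁` is immersed in `C₂`,
then `C₂` is not immersed in `C₁`. -/
theorem statement15 (Λ : Finset PP) (hΛ : PlaneFamily Λ)
    (s₁ s₂ : Finset PP) (hs₁ : s₁ ⊆ Λ) (hs₂ : s₂ ⊆ Λ)
    (hc₁ : s₁.card = 3) (hc₂ : s₂.card = 3)
    (h : Immersed s₁ s₂) : ¬ Immersed s₂ s₁ := by
  intro h'
  obtain ⟨a, b, hab, hab₁⟩ := Finset.card_eq_two.mp (card_sdiff_eq_two hc₁ h.1)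
  obtain ⟨d, e, hde, hde₂⟩ := Finset.card_eq_two.mp (card_sdiff_eq_two hc₂ h'.1)
  have haΛ : a ∈ Λ := hs₁ (Finset.sdiff_subset (by simp [hab₁] : a ∈ s₁ \ s₂))
  have hbΛ : b ∈ Λ := hs₁ (Finset.sdiff_subset (by simp [hab₁] : b ∈ s₁ \ s₂))
  have hdΛ : d ∈ Λ := hs₂ (Finset.sdiff_subset (by simp [hde₂] : d ∈ s₂ \ s₁))
  have heΛ : e ∈ Λ := hs₂ (Finset.sdiff_subset (by simp [hde₂] : e ∈ s₂ \ s₁))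
  have hA := hΛ.1 a haΛ
  have hB := hΛ.1 b hbΛ
  have hD := hΛ.1 d hdΛ
  have hE := hΛ.1 e heΛ
  obtain ⟨q, hq⟩ := hA.exists_apply_eq hB (hΛ.2.1 a haΛ b hbΛ hab)
  obtain ⟨v, hv, hvab⟩ := hA.exists_dirSlope_eq hB (hΛ.2.1 a haΛ b hbΛ hab)
  by_cases hvde : dirSlope d v = dirSlope e v
  · obtain ⟨p, hp⟩ := hD.exists_apply_eq hE (hΛ.2.1 d hdΛ e heΛ hde)
    exact not_straddles_and_straddles (dirSlope · v) h.1.le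
      (forall_mem_pair_eq hab₁ (dirSlope · v) hvab) (forall_mem_pair_eq hde₂ (dirSlope · v) hvde)
      ⟨h.straddles_dirSlope hΛ hs₁ hs₂ hab₁ hab hv hvab hq,
        h'.straddles_dirSlope hΛ hs₂ hs₁ hde₂ hde hv hvde hp⟩
  · obtain ⟨t, ht⟩ := hD.exists_apply_eq_on_line hE q hvde
    have hr := hA.apply_eq_on_line hB hq hvab t
    let φ : PP → ℝ := fun g => g (q + t • v).1 (q + t • v).2
    exact not_straddles_and_straddles φ h.1.le
      (forall_mem_pair_eq hab₁ φ hr) (forall_mem_pair_eq hde₂ φ ht)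
      ⟨h.straddles_apply hab₁ hr, h'.straddles_apply hde₂ ht⟩
end
end

section
/- Let Λ be a set of nonvertical planes in ℝ³ in general position, let a, b ∈ Λ be distinct with intersection line l_{a,b}, and let p ∈ l_{a,b} be a point not lying on any plane of D = Λ \ {a,b}. Let ρ be one of the two rays of l_{a,b} emanating from p, let p_1, …, p_j be the intersection points of the planes of D with ρ, ordered along ρ away from p, and let d_i ∈ D be the plane through p_i. Say d ∈ D is below p if d(p_x,p_y) < p_z and above p if d(p_x,p_y) > p_z, and let λ(q) denote the level of a point q (the number of planes of Λ strictly below q). Then for every 2 ≤ i ≤ j: λ(p_i) = λ(p_{i−1}) − 1 if and only if both d_{i−1} and d_i are below p; λ(p_i) = λ(p_{i−1}) + 1 if and only if both d_{i−1} and d_i are above p; and λ(p_i) = λ(p_{i−1}) if and only if exactly one of d_{i−1}, d_i is below p. -/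
open scoped Classical

noncomputable section

private lemma affine_line (e : PP) (he : IsAffinePlane e) (px py pz w1 w2 w3 : ℝ) :
    ∃ c1 : ℝ, ∀ s : ℝ,
      e (px + s * w1) (py + s * w2) - (pz + s * w3) = (e px py - pz) + c1 * s := by
  obtain ⟨α, β, δ, h⟩ := he
  refine ⟨α * w1 + β * w2 - w3, fun s => ?_⟩
  rw [h, h]; ring

private lemma sign_after (c0 c1 t0 s : ℝ) (h0 : c0 + c1 * t0 = 0)
    (ht0 : 0 < t0) (ht : t0 < s) : (c0 + c1 * s < 0 ↔ 0 < c0) := by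
  constructor <;> intro h <;> nlinarith

private lemma sign_before (c0 c1 t0 s : ℝ) (h0 : c0 + c1 * t0 = 0)
    (ht : 0 < s) (ht0 : s < t0) : (c0 + c1 * s < 0 ↔ c0 < 0) := by
  constructor <;> intro h <;> nlinarith

/-- Let `Λ` be a set of nonvertical planes in ℝ³ in general position, `a ≠ b`
in `Λ` with intersection line `l_{a,b}`, and `p = (px,py,pz) ∈ l_{a,b}` not on any plane of
`D = Λ \ {a,b}`. Let `ρ` be one of the two rays of `l_{a,b}` emanating from `p` (direction
`w`, parameters `s > 0`), let `P 0, P 1, …, P (j−1)` be the intersection points of the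
planes of `D` with `ρ`, ordered along `ρ` away from `p`, with `d i` the plane through `P i`.
Then for consecutive intersection points: the level drops by one iff both planes are below
`p`, rises by one iff both are above `p`, and stays the same iff exactly one is below `p`. -/
theorem statement16 (Λ : Finset PP) (hΛ : PlaneFamily Λ)
    (a b : PP) (ha : a ∈ Λ) (hb : b ∈ Λ) (hab : a ≠ b)
    (px py pz : ℝ) (hpa : a px py = pz) (hpb : b px py = pz)
    (hgen : ∀ d ∈ Λ \ {a, b}, d px py ≠ pz)
    (w : ℝ × ℝ × ℝ) (hw : w ≠ 0)
    (hline : ∀ t : ℝ, a (px + t * w.1) (py + t * w.2.1) = pz + t * w.2.2 ∧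
        b (px + t * w.1) (py + t * w.2.1) = pz + t * w.2.2)
    (j : ℕ) (t : ℕ → ℝ) (d : ℕ → PP)
    (P : ℕ → ℝ × ℝ × ℝ)
    (hP : ∀ i, P i = (px + t i * w.1, py + t i * w.2.1, pz + t i * w.2.2))
    (ht0 : ∀ i, i < j → 0 < t i)
    (htmono : ∀ i₁ i₂, i₁ < i₂ → i₂ < j → t i₁ < t i₂)
    (hdD : ∀ i, i < j → d i ∈ Λ \ {a, b})
    (hdi : ∀ i, i < j →
      d i (px + t i * w.1) (py + t i * w.2.1) = pz + t i * w.2.2)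
    (hinj : ∀ i₁, i₁ < j → ∀ i₂, i₂ < j → d i₁ = d i₂ → i₁ = i₂)
    (hcover : ∀ e ∈ Λ \ {a, b},
      (∃ s : ℝ, 0 < s ∧ e (px + s * w.1) (py + s * w.2.1) = pz + s * w.2.2) →
      ∃ i, i < j ∧ e = d i) :
    ∀ i, i + 1 < j →
      (((level Λ (P (i + 1)).1 (P (i + 1)).2.1 (P (i + 1)).2.2 : ℤ) =
          (level Λ (P i).1 (P i).2.1 (P i).2.2 : ℤ) - 1) ↔
        (d i px py < pz ∧ d (i + 1) px py < pz)) ∧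
      (((level Λ (P (i + 1)).1 (P (i + 1)).2.1 (P (i + 1)).2.2 : ℤ) =
          (level Λ (P i).1 (P i).2.1 (P i).2.2 : ℤ) + 1) ↔
        (pz < d i px py ∧ pz < d (i + 1) px py)) ∧
      (((level Λ (P (i + 1)).1 (P (i + 1)).2.1 (P (i + 1)).2.2 : ℤ) =
          (level Λ (P i).1 (P i).2.1 (P i).2.2 : ℤ)) ↔
        ((d i px py < pz ∧ pz < d (i + 1) px py) ∨
          (pz < d i px py ∧ d (i + 1) px py < pz))) := by
  intro i hi1
  have hi : i < j := Nat.lt_of_succ_lt hi1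
  have hx12 : t i < t (i + 1) := htmono i (i + 1) (Nat.lt_succ_self i) hi1
  have hx1 : 0 < t i := ht0 i hi
  have hdiΛ : d i ∈ Λ := (Finset.mem_sdiff.mp (hdD i hi)).1
  have hdi1Λ : d (i + 1) ∈ Λ := (Finset.mem_sdiff.mp (hdD (i + 1) hi1)).1
  have hdne : d i ≠ d (i + 1) := fun h => by
    have := hinj i hi (i + 1) hi1 h; omega
  have hgi : d i px py ≠ pz := hgen (d i) (hdD i hi)
  have hgi1 : d (i + 1) px py ≠ pz := hgen (d (i + 1)) (hdD (i + 1) hi1)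
  -- level as a sum
  have hcard : ∀ s : ℝ, ((level Λ (px + s * w.1) (py + s * w.2.1) (pz + s * w.2.2)) : ℤ)
      = ∑ e ∈ Λ, if e (px + s * w.1) (py + s * w.2.1) < pz + s * w.2.2 then (1 : ℤ) else 0 := by
    intro s
    rw [level, Finset.card_filter]
    push_cast
    rfl
  -- the key computation
  have key : (level Λ (P (i + 1)).1 (P (i + 1)).2.1 (P (i + 1)).2.2 : ℤ)
      - (level Λ (P i).1 (P i).2.1 (P i).2.2 : ℤ)
      = (if pz < d i px py then 1 else 0) - (if d (i + 1) px py < pz then 1 else 0) := by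
    rw [hP i, hP (i + 1)]
    dsimp only
    rw [hcard, hcard, ← Finset.sum_sub_distrib]
    have hsub : ({d i, d (i + 1)} : Finset PP) ⊆ Λ := by
      intro e he
      rcases Finset.mem_insert.mp he with h | h
      · rwa [h]
      · rw [Finset.mem_singleton.mp h]; exact hdi1Λ
    have hzero : ∀ e ∈ Λ, e ∉ ({d i, d (i + 1)} : Finset PP) →
        ((if e (px + t (i + 1) * w.1) (py + t (i + 1) * w.2.1) < pz + t (i + 1) * w.2.2
            then (1 : ℤ) else 0)
          - (if e (px + t i * w.1) (py + t i * w.2.1) < pz + t i * w.2.2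
            then (1 : ℤ) else 0)) = 0 := by
      intro e heΛ hepair
      have hiff : (e (px + t (i + 1) * w.1) (py + t (i + 1) * w.2.1) < pz + t (i + 1) * w.2.2)
          ↔ (e (px + t i * w.1) (py + t i * w.2.1) < pz + t i * w.2.2) := by
        by_cases hea : e = a
        · subst hea
          rw [(hline (t (i + 1))).1, (hline (t i)).1]
          simp
        by_cases heb : e = b
        · subst heb
          rw [(hline (t (i + 1))).2, (hline (t i)).2]
          simp
        have heD : e ∈ Λ \ {a, b} := by
          rw [Finset.mem_sdiff]
          exact ⟨heΛ, by simp [hea, heb]⟩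
        have hc0 : e px py - pz ≠ 0 := sub_ne_zero.mpr (hgen e heD)
        obtain ⟨c1, hc1⟩ := affine_line e (hΛ.1 e heΛ) px py pz w.1 w.2.1 w.2.2
        have hcond : ∀ s : ℝ, (e (px + s * w.1) (py + s * w.2.1) < pz + s * w.2.2)
            ↔ ((e px py - pz) + c1 * s < 0) := by
          intro s
          rw [← sub_neg, hc1 s]
        rw [hcond, hcond]
        -- no zero of the affine function in the interval
        have hnozero : ∀ s : ℝ, t i ≤ s → s ≤ t (i + 1) →
            (e px py - pz) + c1 * s ≠ 0 := by
          intro s hs1 hs2 hs0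
          have hspos : 0 < s := lt_of_lt_of_le hx1 hs1
          have hes : e (px + s * w.1) (py + s * w.2.1) = pz + s * w.2.2 := by
            have h := hc1 s
            rw [hs0] at h
            linarith
          obtain ⟨i', hi'j, hei'⟩ := hcover e heD ⟨s, hspos, hes⟩
          have hdieq : e (px + t i' * w.1) (py + t i' * w.2.1) = pz + t i' * w.2.2 := by
            rw [hei']; exact hdi i' hi'j
          have hz' : (e px py - pz) + c1 * t i' = 0 := by
            have h := hc1 (t i')
            rw [hdieq] at h
            linarith
          have hc1ne : c1 ≠ 0 := by
            intro h
            rw [h] at hs0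
            simp at hs0
            exact hc0 hs0
          have hseq : s = t i' := by
            have : c1 * s = c1 * t i' := by linarith
            exact mul_left_cancel₀ hc1ne this
          have hii : i' = i ∨ i' = i + 1 := by
            rcases lt_trichotomy i' i with h | h | h
            · exfalso
              have := htmono i' i h hi
              rw [← hseq] at this
              linarith
            · exact Or.inl h
            · rcases lt_trichotomy i' (i + 1) with h' | h' | h'
              · omega
              · exact Or.inr h'
              · exfalso
                have := htmono (i + 1) i' h' hi'j
                rw [← hseq] at this
                linarith
          rcases hii with h | h
          · exact hepair (by rw [hei', h]; exact Finset.mem_insert_self _ _)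
          · exact hepair (by rw [hei', h]; simp)
        by_cases hA : (e px py - pz) + c1 * t (i + 1) < 0 <;>
          by_cases hB : (e px py - pz) + c1 * t i < 0
        · exact iff_of_true hA hB
        · exfalso
          have hcont : Continuous fun s : ℝ => (e px py - pz) + c1 * s := by fun_prop
          have h0mem : (0 : ℝ) ∈ Set.Icc ((e px py - pz) + c1 * t (i + 1))
              ((e px py - pz) + c1 * t i) := ⟨le_of_lt hA, le_of_not_gt hB⟩
          obtain ⟨s, hsmem, hs0⟩ :=
            intermediate_value_Icc' (le_of_lt hx12) hcont.continuousOn h0mem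
          exact hnozero s hsmem.1 hsmem.2 hs0
        · exfalso
          have hcont : Continuous fun s : ℝ => (e px py - pz) + c1 * s := by fun_prop
          have h0mem : (0 : ℝ) ∈ Set.Icc ((e px py - pz) + c1 * t i)
              ((e px py - pz) + c1 * t (i + 1)) := ⟨le_of_lt hB, le_of_not_gt hA⟩
          obtain ⟨s, hsmem, hs0⟩ :=
            intermediate_value_Icc (le_of_lt hx12) hcont.continuousOn h0mem
          exact hnozero s hsmem.1 hsmem.2 hs0
        · exact iff_of_false hA hB
      simp only [hiff, sub_self]
    rw [← Finset.sum_subset hsub hzero, Finset.sum_pair hdne]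
    -- evaluate the two remaining terms
    have hterm1a : ¬ (d i (px + t i * w.1) (py + t i * w.2.1) < pz + t i * w.2.2) := by
      rw [hdi i hi]; exact lt_irrefl _
    have hterm2b : ¬ (d (i + 1) (px + t (i + 1) * w.1) (py + t (i + 1) * w.2.1)
        < pz + t (i + 1) * w.2.2) := by
      rw [hdi (i + 1) hi1]; exact lt_irrefl _
    obtain ⟨c1, hc1⟩ := affine_line (d i) (hΛ.1 (d i) hdiΛ) px py pz w.1 w.2.1 w.2.2
    have hz1 : (d i px py - pz) + c1 * t i = 0 := by
      have h := hc1 (t i); rw [hdi i hi] at h; linarith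
    have hterm1b : (d i (px + t (i + 1) * w.1) (py + t (i + 1) * w.2.1)
        < pz + t (i + 1) * w.2.2) ↔ pz < d i px py := by
      rw [← sub_neg, hc1 (t (i + 1)), sign_after _ _ _ _ hz1 hx1 hx12, sub_pos]
    obtain ⟨c1', hc1'⟩ := affine_line (d (i + 1)) (hΛ.1 (d (i + 1)) hdi1Λ) px py pz w.1 w.2.1 w.2.2
    have hz2 : (d (i + 1) px py - pz) + c1' * t (i + 1) = 0 := by
      have h := hc1' (t (i + 1)); rw [hdi (i + 1) hi1] at h; linarith
    have hterm2a : (d (i + 1) (px + t i * w.1) (py + t i * w.2.1)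
        < pz + t i * w.2.2) ↔ d (i + 1) px py < pz := by
      rw [← sub_neg, hc1' (t i), sign_before _ _ _ _ hz2 hx1 hx12, sub_neg]
    rw [if_neg hterm1a, if_neg hterm2b]
    by_cases h1 : pz < d i px py <;> by_cases h2 : d (i + 1) px py < pz <;>
      simp [hterm1b, hterm2a, h1, h2]
  -- final case analysis
  rcases lt_or_gt_of_ne hgi with h1 | h1 <;> rcases lt_or_gt_of_ne hgi1 with h2 | h2
  · rw [if_neg (by linarith), if_pos h2] at key
    refine ⟨⟨fun _ => ⟨h1, h2⟩, fun _ => by linarith⟩,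
      ⟨fun h => False.elim (by linarith), fun h => False.elim (by linarith [h.1])⟩,
      ⟨fun h => False.elim (by linarith), fun h => ?_⟩⟩
    rcases h with ⟨h', _⟩ | ⟨h', _⟩ <;> linarith
  · rw [if_neg (by linarith), if_neg (by linarith)] at key
    refine ⟨⟨fun h => False.elim (by linarith), fun h => False.elim (by linarith [h.2])⟩,
      ⟨fun h => False.elim (by linarith), fun h => False.elim (by linarith [h.1])⟩,
      ⟨fun _ => Or.inl ⟨h1, h2⟩, fun _ => by linarith⟩⟩
  · rw [if_pos h1, if_pos h2] at key
    refine ⟨⟨fun h => False.elim (by linarith), fun h => False.elim (by linarith [h.1])⟩,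
      ⟨fun h => False.elim (by linarith), fun h => False.elim (by linarith [h.2])⟩,
      ⟨fun _ => Or.inr ⟨h1, h2⟩, fun _ => by linarith⟩⟩
  · rw [if_pos h1, if_neg (by linarith)] at key
    refine ⟨⟨fun h => False.elim (by linarith), fun h => False.elim (by linarith [h.1])⟩,
      ⟨fun _ => ⟨h1, h2⟩, fun _ => by linarith⟩,
      ⟨fun h => False.elim (by linarith), fun h => ?_⟩⟩
    rcases h with ⟨h', _⟩ | ⟨_, h'⟩ <;> linarith
end
end

section
/- Let Λ be a set of nonvertical planes in ℝ³ in general position and let k be a nonnegative integer. Let a, b ∈ Λ be distinct with intersection line l_{a,b}, let p ∈ l_{a,b} be a point not lying on any plane of D = Λ \ {a,b}, and let ρ be one of the two rays of l_{a,b} emanating from p. Set D_ρ = {d ∈ D : d intersects ρ}, D^k = {d ∈ D : C_{a,b,d} ∈ C^k}, h_up = {d ∈ D : d(p_x,p_y) > p_z} and h_down = {d ∈ D : d(p_x,p_y) < p_z}. Then | |h_up ∩ D^k ∩ D_ρ| − |h_down ∩ D^k ∩ D_ρ| | ≤ 1. -/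
open scoped Classical

noncomputable section

/-!
Parametrize `l_{a,b}` as `p + t w`. Restricted to this line, the signed vertical gap of a plane
`d ∈ D` is an affine function of `t`, nonzero at `t = 0`; the planes of `D_ρ` are those vanishing
at some `t > 0`, and their zeros are pairwise distinct because no four planes share a point.
Moving from `p` along `ρ`, crossing a plane of `h_up` raises the level of the moving point by one
and crossing a plane of `h_down` lowers it by one. Hence, for `e ∈ D_ρ`, the level of `p_{a,b,e}`
is the level of `p`, plus the height of this `±1` walk just before the step at `e`, minus one if
`e ∈ h_down`. So the `k`-corridors in `h_up` are the up-steps leaving height `m` and those in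
`h_down` are the down-steps leaving height `m + 1`, for one fixed `m`. These steps are exactly
the crossings of the level `m + 1/2` by the walk, and such crossings alternate in direction.
-/

open Finset

section Walk

variable {ι α : Type*} [LinearOrder α]

def walkHeight (s : Finset ι) (σ : ι → α) (ε : ι → ℤ) (i : ι) : ℤ :=
  ∑ j ∈ s with σ j < σ i, ε j

theorem card_upSteps_sub_card_downSteps_eq (s : Finset ι) (σ : ι → α) (hσ : Set.InjOn σ s)
    (ε : ι → ℤ) (hε : ∀ i ∈ s, ε i = 1 ∨ ε i = -1) (m : ℤ) :
    (#{i ∈ s | ε i = 1 ∧ walkHeight s σ ε i = m} : ℤ)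
      - #{i ∈ s | ε i = -1 ∧ walkHeight s σ ε i = m + 1}
      = (if m + 1 ≤ ∑ i ∈ s, ε i then 1 else 0) - if m + 1 ≤ 0 then 1 else 0 := by
  induction s using Finset.induction_on_max_value σ with
  | empty => simp
  | insert a s ha hmax ih =>
    have hlt : ∀ x ∈ s, σ x < σ a := fun x hx =>
      (hmax x hx).lt_of_ne fun h => ne_of_mem_of_not_mem hx ha (hσ (by simp [hx]) (by simp) h)
    have height_a : walkHeight (insert a s) σ ε a = ∑ i ∈ s, ε i := by
      rw [walkHeight, filter_insert, if_neg (lt_irrefl _), filter_true_of_mem hlt]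
    have height_s : ∀ x ∈ s, walkHeight (insert a s) σ ε x = walkHeight s σ ε x := fun x hx => by
      rw [walkHeight, walkHeight, filter_insert, if_neg (hlt x hx).asymm]
    have steps_s : ∀ c n, {i ∈ s | ε i = c ∧ walkHeight (insert a s) σ ε i = n}
        = {i ∈ s | ε i = c ∧ walkHeight s σ ε i = n} := fun c n =>
      filter_congr fun x hx => by rw [height_s x hx]
    have ha_steps : ∀ c n, a ∉ {i ∈ s | ε i = c ∧ walkHeight s σ ε i = n} := fun c n h =>
      ha (mem_filter.1 h).1
    specialize ih (hσ.mono (by simp)) fun i hi => hε i (by simp [hi])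
    rw [filter_insert, filter_insert, height_a, steps_s, steps_s, sum_insert ha]
    rcases hε a (by simp) with h | h <;> simp only [h, true_and] <;> norm_num <;>
      split_ifs at ih ⊢ <;> (try rw [card_insert_of_notMem (ha_steps _ _)]) <;> omega

theorem abs_card_upSteps_sub_card_downSteps_le_one (s : Finset ι) (σ : ι → α)
    (hσ : Set.InjOn σ s) (ε : ι → ℤ) (hε : ∀ i ∈ s, ε i = 1 ∨ ε i = -1) (m : ℤ) :
    |(#{i ∈ s | ε i = 1 ∧ walkHeight s σ ε i = m} : ℤ)
      - #{i ∈ s | ε i = -1 ∧ walkHeight s σ ε i = m + 1}| ≤ 1 := by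
  rw [card_upSteps_sub_card_downSteps_eq s σ hσ ε hε m]
  split_ifs <;> norm_num

end Walk

section AffineZero

/-- The zero of `g`, for `g` affine and nonconstant; for constant `g` it is `-g 0 / 0 = 0`. -/
def zeroOf (g : ℝ → ℝ) : ℝ := -g 0 / (g 1 - g 0)

variable {g : ℝ → ℝ}

theorem zeroOf_eq_zero_of_slope_eq_zero (hc : g 1 - g 0 = 0) : zeroOf g = 0 := by
  simp [zeroOf, hc]

theorem apply_eq_slope_mul_sub_zeroOf (hg : ∀ t, g t = g 0 + t * (g 1 - g 0))
    (hc : g 1 - g 0 ≠ 0) (t : ℝ) : g t = (g 1 - g 0) * (t - zeroOf g) := by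
  rw [hg t, zeroOf]
  field_simp
  ring

theorem apply_zeroOf (hg : ∀ t, g t = g 0 + t * (g 1 - g 0)) (h : 0 < zeroOf g) :
    g (zeroOf g) = 0 := by
  have hc : g 1 - g 0 ≠ 0 := fun hc => h.ne' (zeroOf_eq_zero_of_slope_eq_zero hc)
  rw [apply_eq_slope_mul_sub_zeroOf hg hc, sub_self, mul_zero]

theorem exists_pos_eq_zero_iff (hg : ∀ t, g t = g 0 + t * (g 1 - g 0)) (h0 : g 0 ≠ 0) :
    (∃ s, 0 < s ∧ g s = 0) ↔ 0 < zeroOf g := by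
  refine ⟨fun ⟨s, hs, hgs⟩ => ?_, fun h => ⟨zeroOf g, h, apply_zeroOf hg h⟩⟩
  by_cases hc : g 1 - g 0 = 0
  · rw [hg, hc, mul_zero, add_zero] at hgs
    exact absurd hgs h0
  · rw [apply_eq_slope_mul_sub_zeroOf hg hc] at hgs
    have hs' : s = zeroOf g := sub_eq_zero.1 ((mul_eq_zero.1 hgs).resolve_left hc)
    exact hs' ▸ hs

theorem neg_iff_neg_iff_zeroOf_notMem_Ioo (hg : ∀ t, g t = g 0 + t * (g 1 - g 0))
    (h0 : g 0 ≠ 0) {t : ℝ} (ht : 0 < t) (hgt : g t ≠ 0) :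
    g t < 0 ↔ (g 0 < 0 ↔ zeroOf g ∉ Set.Ioo 0 t) := by
  by_cases hc : g 1 - g 0 = 0
  · rw [zeroOf_eq_zero_of_slope_eq_zero hc, hg t, hc]
    simp
  · have hlin := apply_eq_slope_mul_sub_zeroOf hg hc
    generalize g 1 - g 0 = c at hc hlin
    generalize zeroOf g = z at hlin ⊢
    rw [hlin t] at hgt
    rw [hlin t, hlin 0, Set.mem_Ioo]
    have hne : t - z ≠ 0 := right_ne_zero_of_mul hgt
    rcases lt_or_gt_of_ne hc with hc | hc <;> rcases lt_or_gt_of_ne hne with h | h <;>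
      simp only [mul_neg_iff] <;> grind

end AffineZero

theorem card_neg_at_zeroOf_eq {ι : Type*} (D : Finset ι) (g : ι → ℝ → ℝ)
    (hg : ∀ d ∈ D, ∀ t, g d t = g d 0 + t * (g d 1 - g d 0)) (h0 : ∀ d ∈ D, g d 0 ≠ 0)
    {e : ι} (he : e ∈ D) (he0 : 0 < zeroOf (g e))
    (hsep : ∀ d ∈ D, g d (zeroOf (g e)) = 0 → d = e) :
    (#{d ∈ D | g d (zeroOf (g e)) < 0} : ℤ)
      = #{d ∈ D | g d 0 < 0}
        + walkHeight {d ∈ D | 0 < zeroOf (g d)} (fun d => zeroOf (g d))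
            (fun d => if g d 0 < 0 then -1 else 1) e
        - if g e 0 < 0 then 1 else 0 := by
  have hself : (if g e 0 < 0 then 1 else 0 : ℤ)
      = ∑ d ∈ D, if d = e then (if g d 0 < 0 then 1 else 0) else 0 := by
    rw [sum_ite_eq', if_pos he]
  rw [walkHeight, filter_filter, sum_filter, natCast_card_filter, natCast_card_filter, hself,
    ← sum_add_distrib, ← sum_sub_distrib]
  refine sum_congr rfl fun d hd => ?_
  by_cases hde : d = e
  · subst hde
    simp [apply_zeroOf (hg d hd) he0]
  · have hgd : g d (zeroOf (g e)) ≠ 0 := fun h => hde (hsep d hd h)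
    have hsign := neg_iff_neg_iff_zeroOf_notMem_Ioo (hg d hd) (h0 d hd) he0 hgd
    rw [Set.mem_Ioo] at hsign
    split_ifs <;> grind

/-- Negative exactly when the point `p + t w` lies strictly above the plane `d`. -/
def lineGap (px py pz : ℝ) (w : ℝ × ℝ × ℝ) (d : PP) (t : ℝ) : ℝ :=
  d (px + t * w.1) (py + t * w.2.1) - (pz + t * w.2.2)

section Planes

variable {Λ : Finset PP} {a b d e : PP} {px py pz : ℝ} {w : ℝ × ℝ × ℝ}

theorem IsAffinePlane.lineGap_eq (hd : IsAffinePlane d) (t : ℝ) :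
    lineGap px py pz w d t
      = lineGap px py pz w d 0 + t * (lineGap px py pz w d 1 - lineGap px py pz w d 0) := by
  obtain ⟨α, β, δ, hd⟩ := hd
  simp only [lineGap, hd]
  ring

theorem lineGap_zero : lineGap px py pz w d 0 = d px py - pz := by
  simp [lineGap]

theorem lineGap_eq_zero_iff {t : ℝ} :
    lineGap px py pz w d t = 0 ↔ d (px + t * w.1) (py + t * w.2.1) = pz + t * w.2.2 :=
  sub_eq_zero

theorem exists_pos_lineGap_eq_zero_iff (hd : IsAffinePlane d) (h0 : d px py ≠ pz) :
    (∃ s : ℝ, 0 < s ∧ d (px + s * w.1) (py + s * w.2.1) = pz + s * w.2.2)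
      ↔ 0 < zeroOf (lineGap px py pz w d) := by
  simp only [← lineGap_eq_zero_iff]
  exact exists_pos_eq_zero_iff hd.lineGap_eq (lineGap_zero.trans_ne (sub_ne_zero.2 h0))

theorem level_eq_card_lineGap_neg (t : ℝ) :
    level Λ (px + t * w.1) (py + t * w.2.1) (pz + t * w.2.2)
      = #{d ∈ Λ | lineGap px py pz w d t < 0} := by
  simp only [level, lineGap, sub_neg]

theorem card_filter_sdiff_of_lineGap_eq_zero
    (hline : ∀ t : ℝ, a (px + t * w.1) (py + t * w.2.1) = pz + t * w.2.2 ∧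
        b (px + t * w.1) (py + t * w.2.1) = pz + t * w.2.2) (t : ℝ) :
    #{d ∈ Λ \ {a, b} | lineGap px py pz w d t < 0} = #{d ∈ Λ | lineGap px py pz w d t < 0} := by
  have hab : ∀ d ∈ ({a, b} : Finset PP), lineGap px py pz w d t = 0 := by
    simp [lineGap_eq_zero_iff, hline t]
  congr 1
  ext d
  simp only [mem_filter, mem_sdiff, and_assoc]
  exact ⟨fun h => ⟨h.1, h.2.2⟩, fun h => ⟨h.1, fun hd => (hab d hd ▸ h.2).false, h.2⟩⟩

theorem isKCorridorTriple_iff_level (hΛ : PlaneFamily Λ) {c : PP} (k : ℕ)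
    (ha : a ∈ Λ) (hb : b ∈ Λ) (hc : c ∈ Λ) (hab : a ≠ b) (hac : a ≠ c) (hbc : b ≠ c)
    {x₀ y₀ z₀ : ℝ} (ha₀ : a x₀ y₀ = z₀) (hb₀ : b x₀ y₀ = z₀) (hc₀ : c x₀ y₀ = z₀) :
    IsKCorridorTriple Λ k {a, b, c} ↔ level Λ x₀ y₀ z₀ = k := by
  refine ⟨fun ⟨x, y, z, hxyz, hk⟩ => ?_, fun hk => ⟨x₀, y₀, z₀, by simp [ha₀, hb₀, hc₀], hk⟩⟩
  obtain ⟨q, -, hq⟩ := hΛ.2.2.1 a ha b hb c hc hab hac hbc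
  have hax : a x y = z := hxyz a (by simp)
  have hxy : (x, y) = (x₀, y₀) :=
    (hq (x, y) ⟨by rw [hax, hxyz b (by simp)], by rw [hax, hxyz c (by simp)]⟩).trans
      (hq (x₀, y₀) ⟨ha₀.trans hb₀.symm, ha₀.trans hc₀.symm⟩).symm
  obtain ⟨rfl, rfl⟩ := Prod.mk.inj hxy
  rwa [← ha₀, hax]

theorem eq_of_lineGap_eq_zero (hΛ : PlaneFamily Λ) (ha : a ∈ Λ) (hb : b ∈ Λ) (hab : a ≠ b)
    (hline : ∀ t : ℝ, a (px + t * w.1) (py + t * w.2.1) = pz + t * w.2.2 ∧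
        b (px + t * w.1) (py + t * w.2.1) = pz + t * w.2.2)
    (hd : d ∈ Λ \ {a, b}) (he : e ∈ Λ \ {a, b}) {t : ℝ}
    (hdt : lineGap px py pz w d t = 0) (het : lineGap px py pz w e t = 0) : d = e := by
  simp only [mem_sdiff, mem_insert, mem_singleton, not_or] at hd he
  by_contra hde
  refine hΛ.2.2.2 a ha b hb d hd.1 e he.1 hab (Ne.symm hd.2.1) (Ne.symm he.2.1)
    (Ne.symm hd.2.2) (Ne.symm he.2.2) hde ⟨px + t * w.1, py + t * w.2.1, ?_⟩
  rw [(hline t).1, (hline t).2, lineGap_eq_zero_iff.1 hdt, lineGap_eq_zero_iff.1 het]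
  simp

theorem isKCorridorTriple_iff_walkHeight (hΛ : PlaneFamily Λ) (ha : a ∈ Λ) (hb : b ∈ Λ)
    (hab : a ≠ b) (hgen : ∀ d ∈ Λ \ {a, b}, d px py ≠ pz)
    (hline : ∀ t : ℝ, a (px + t * w.1) (py + t * w.2.1) = pz + t * w.2.2 ∧
        b (px + t * w.1) (py + t * w.2.1) = pz + t * w.2.2)
    (k : ℕ) (he : e ∈ Λ \ {a, b}) (he0 : 0 < zeroOf (lineGap px py pz w e)) :
    IsKCorridorTriple Λ k {a, b, e} ↔
      (#{d ∈ Λ \ {a, b} | lineGap px py pz w d 0 < 0} : ℤ)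
        + walkHeight {d ∈ Λ \ {a, b} | 0 < zeroOf (lineGap px py pz w d)}
            (fun d => zeroOf (lineGap px py pz w d))
            (fun d => if lineGap px py pz w d 0 < 0 then -1 else 1) e
        - (if lineGap px py pz w e 0 < 0 then 1 else 0) = k := by
  set g := lineGap px py pz w
  have hg : ∀ d ∈ Λ \ {a, b}, ∀ t, g d t = g d 0 + t * (g d 1 - g d 0) := fun d hd =>
    (hΛ.1 d (mem_sdiff.1 hd).1).lineGap_eq
  have h0 : ∀ d ∈ Λ \ {a, b}, g d 0 ≠ 0 := fun d hd =>
    lineGap_zero.trans_ne (sub_ne_zero.2 (hgen d hd))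
  set t := zeroOf (g e)
  have het : g e t = 0 := apply_zeroOf (hg e he) he0
  obtain ⟨heΛ, hea, heb⟩ : e ∈ Λ ∧ e ≠ a ∧ e ≠ b := by simpa using he
  rw [isKCorridorTriple_iff_level hΛ k ha hb heΛ hab (Ne.symm hea) (Ne.symm heb) (hline t).1
    (hline t).2 (lineGap_eq_zero_iff.1 het), level_eq_card_lineGap_neg,
    ← card_filter_sdiff_of_lineGap_eq_zero hline, ← card_neg_at_zeroOf_eq _ g hg h0 he he0
      fun d hd hdt => eq_of_lineGap_eq_zero hΛ ha hb hab hline hd he hdt het, Nat.cast_inj]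

end Planes

theorem statement17_general (Λ : Finset PP) (k : ℕ) (hΛ : PlaneFamily Λ)
    (a b : PP) (ha : a ∈ Λ) (hb : b ∈ Λ) (hab : a ≠ b)
    (px py pz : ℝ)
    (hgen : ∀ d ∈ Λ \ {a, b}, d px py ≠ pz)
    (w : ℝ × ℝ × ℝ)
    (hline : ∀ t : ℝ, a (px + t * w.1) (py + t * w.2.1) = pz + t * w.2.2 ∧
        b (px + t * w.1) (py + t * w.2.1) = pz + t * w.2.2) :
    |((((Λ \ {a, b}).filter fun e =>
          (∃ s : ℝ, 0 < s ∧ e (px + s * w.1) (py + s * w.2.1) = pz + s * w.2.2) ∧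
            pz < e px py ∧ IsKCorridorTriple Λ k {a, b, e}).card : ℤ) -
      (((Λ \ {a, b}).filter fun e =>
          (∃ s : ℝ, 0 < s ∧ e (px + s * w.1) (py + s * w.2.1) = pz + s * w.2.2) ∧
            e px py < pz ∧ IsKCorridorTriple Λ k {a, b, e}).card : ℤ))| ≤ 1 := by
  set g := lineGap px py pz w
  set Dρ := {d ∈ Λ \ {a, b} | 0 < zeroOf (g d)}
  set ε : PP → ℤ := fun d => if g d 0 < 0 then -1 else 1
  set m : ℤ := k - #{d ∈ Λ \ {a, b} | g d 0 < 0}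
  have hsteps : ∀ e ∈ Λ \ {a, b},
      ((∃ s : ℝ, 0 < s ∧ e (px + s * w.1) (py + s * w.2.1) = pz + s * w.2.2) ∧
        pz < e px py ∧ IsKCorridorTriple Λ k {a, b, e}
        ↔ 0 < zeroOf (g e) ∧ ε e = 1 ∧ walkHeight Dρ (fun d => zeroOf (g d)) ε e = m) ∧
      ((∃ s : ℝ, 0 < s ∧ e (px + s * w.1) (py + s * w.2.1) = pz + s * w.2.2) ∧
        e px py < pz ∧ IsKCorridorTriple Λ k {a, b, e}
        ↔ 0 < zeroOf (g e) ∧ ε e = -1 ∧ walkHeight Dρ (fun d => zeroOf (g d)) ε e = m + 1) := by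
    intro e he
    have he_ne : e px py ≠ pz := hgen e he
    rw [exists_pos_lineGap_eq_zero_iff (hΛ.1 e (mem_sdiff.1 he).1) he_ne]
    constructor <;> refine and_congr_right fun he0 => ?_ <;>
      rw [isKCorridorTriple_iff_walkHeight hΛ ha hb hab hgen hline k he he0] <;>
      simp only [ε, m, g, lineGap_zero, sub_neg] <;> split_ifs <;> grind
  have hinj : Set.InjOn (fun d => zeroOf (g d)) Dρ := by
    intro d hd e he hde
    simp only [Dρ, coe_filter, Set.mem_ofPred_eq] at hd he hde
    have hzero : ∀ c ∈ Λ \ {a, b}, 0 < zeroOf (g c) → g c (zeroOf (g c)) = 0 := fun c hc =>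
      apply_zeroOf (hΛ.1 c (mem_sdiff.1 hc).1).lineGap_eq
    exact eq_of_lineGap_eq_zero hΛ ha hb hab hline hd.1 he.1 (hde ▸ hzero d hd.1 hd.2)
      (hzero e he.1 he.2)
  rw [filter_congr fun e he => (hsteps e he).1, filter_congr fun e he => (hsteps e he).2]
  simpa only [Dρ, filter_filter] using
    abs_card_upSteps_sub_card_downSteps_le_one Dρ _ hinj ε (fun d _ => by grind) m

/-- Let `Λ` be a set of nonvertical planes in ℝ³ in general position, `k` a
nonnegative integer, `a ≠ b` in `Λ`, `p = (px,py,pz) ∈ l_{a,b}` not on any plane of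
`D = Λ \ {a,b}`, and `ρ` one of the two rays of `l_{a,b}` emanating from `p` (direction `w`,
parameters `s > 0`). With `D_ρ` the planes of `D` meeting `ρ`,
`D^k = {d ∈ D : C_{a,b,d} ∈ C^k}`, and `h_up`/`h_down` the planes of `D` crossing the
vertical line through `p` above/below `p`, we have
`| |h_up ∩ D^k ∩ D_ρ| − |h_down ∩ D^k ∩ D_ρ| | ≤ 1`. -/
theorem statement17 (Λ : Finset PP) (k : ℕ) (hΛ : PlaneFamily Λ)
    (a b : PP) (ha : a ∈ Λ) (hb : b ∈ Λ) (hab : a ≠ b)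
    (px py pz : ℝ) (hpa : a px py = pz) (hpb : b px py = pz)
    (hgen : ∀ d ∈ Λ \ {a, b}, d px py ≠ pz)
    (w : ℝ × ℝ × ℝ) (hw : w ≠ 0)
    (hline : ∀ t : ℝ, a (px + t * w.1) (py + t * w.2.1) = pz + t * w.2.2 ∧
        b (px + t * w.1) (py + t * w.2.1) = pz + t * w.2.2) :
    |((((Λ \ {a, b}).filter fun e =>
          (∃ s : ℝ, 0 < s ∧ e (px + s * w.1) (py + s * w.2.1) = pz + s * w.2.2) ∧
            pz < e px py ∧ IsKCorridorTriple Λ k {a, b, e}).card : ℤ) -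
      (((Λ \ {a, b}).filter fun e =>
          (∃ s : ℝ, 0 < s ∧ e (px + s * w.1) (py + s * w.2.1) = pz + s * w.2.2) ∧
            e px py < pz ∧ IsKCorridorTriple Λ k {a, b, e}).card : ℤ))| ≤ 1 :=
  statement17_general Λ k hΛ a b ha hb hab px py pz hgen w hline
end
end
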